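/- arXiv:2109.00944 — 5 statements merged into one kernel-verified Lean document; each statement's English description precedes it below -/
import Mathlib

section
/- Let Φ be a possibly reducible crystallographic root system with irreducible components Φ_1,…,Φ_k. A proper face F of the root polytope P of Φ has dimension dim F = k − 1 + Σ_{i=1}^k dim(F ∩ E_i), where the empty face has dimension −1. -/
open scoped RealInnerProductSpace
attribute [local instance] Classical.propDecidable

variable {E : Type*} [NormedAddCommGroup E] [InnerProductSpace ℝ E] [FiniteDimensional ℝ E]

/-- A finite reduced crystallographic root system spanning `E`. -/
structure IsRootSystem (Φ : Finset E) : Prop where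
  nonzero : ∀ γ ∈ Φ, γ ≠ (0 : E)
  span_top : Submodule.span ℝ (Φ : Set E) = ⊤
  reduced : ∀ γ ∈ Φ, ∀ t : ℝ, t • γ ∈ Φ → t = 1 ∨ t = -1
  reflect : ∀ γ ∈ Φ, ∀ δ ∈ Φ, δ - (2 * ⟪δ, γ⟫ / ⟪γ, γ⟫) • γ ∈ Φ
  cry : ∀ γ ∈ Φ, ∀ δ ∈ Φ, ∃ n : ℤ, 2 * ⟪δ, γ⟫ / ⟪γ, γ⟫ = (n : ℝ)

/-- Irreducibility of a set of roots: no splitting into two nonempty mutually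
orthogonal parts. -/
def IsIrredSet (s : Set E) : Prop :=
  ∀ t : Set E, t ⊆ s → (∀ x ∈ t, ∀ y ∈ s \ t, ⟪x, y⟫ = 0) → t = ∅ ∨ t = s

/-- A face of the polytope `P`: a convex extreme subset. -/
def IsFace (P F : Set E) : Prop := IsExtreme ℝ P F ∧ Convex ℝ F

/-- The barycenter of the vertex set (the roots lying on the face `F`). -/
noncomputable def bary (Φ : Finset E) (F : Set E) : E :=
  Finset.centroid ℝ (Φ.filter (· ∈ F)) id

/-- The dimension of a (possibly empty) face: `-1` for the empty face, otherwise the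
dimension of its affine hull. -/
noncomputable def edim (F : Set E) : ℤ :=
  if F = ∅ then -1 else (Module.finrank ℝ (vectorSpan ℝ F) : ℤ)

/-!
Let `V` be the set of roots lying on `F`. An extreme convex subset of `P = conv Φ` is the convex
hull of the roots it contains, so `F = conv V`. Since `Φ = -Φ`, a face containing `0` is all of
`P`; hence `0 ∉ F`, and then even `0 ∉ aff F`, so `dim conv V = dim span V - 1`. A point of
`F ∩ Eᵢ` written as a convex combination of `V` gives no weight to roots in another component
`Eⱼ`, as those would have barycenter `0`; thus `F ∩ Eᵢ = conv (V ∩ Eᵢ)`. Finally `span V` is the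
orthogonal sum of the `span (V ∩ Eᵢ)`, and adding up dimensions gives the formula.
-/

open Module Submodule

section ExtremeSets

variable {𝕜 V : Type*} [Field 𝕜] [LinearOrder 𝕜] [IsStrictOrderedRing 𝕜]
  [AddCommGroup V] [Module 𝕜 V] {P F : Set V}

theorem IsExtreme.mem_of_sum_smul_mem (hPF : IsExtreme 𝕜 P F) (hP : Convex 𝕜 P)
    {ι : Type*} {t : Finset ι} {w : ι → 𝕜} {g : ι → V}
    (hw₀ : ∀ j ∈ t, 0 ≤ w j) (hw₁ : ∑ j ∈ t, w j = 1) (hg : ∀ j ∈ t, g j ∈ P)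
    (hF : ∑ j ∈ t, w j • g j ∈ F) {i : ι} (hi : i ∈ t) (hwi : 0 < w i) : g i ∈ F := by
  have hsum : w i • g i + ∑ j ∈ t.erase i, w j • g j = ∑ j ∈ t, w j • g j :=
    Finset.add_sum_erase _ (fun j => w j • g j) hi
  have hr : w i + ∑ j ∈ t.erase i, w j = 1 := by rw [Finset.add_sum_erase _ w hi, hw₁]
  have hw₀' : ∀ j ∈ t.erase i, 0 ≤ w j := fun j hj => hw₀ j (Finset.mem_of_mem_erase hj)
  rcases (Finset.sum_nonneg hw₀').eq_or_lt with hr0 | hr0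
  · have hrest : ∑ j ∈ t.erase i, w j • g j = 0 := Finset.sum_eq_zero fun j hj => by
      rw [(Finset.sum_eq_zero_iff_of_nonneg hw₀').1 hr0.symm j hj, zero_smul]
    rwa [← hsum, hrest, add_zero, show w i = 1 by linarith, one_smul] at hF
  · have hyP : (t.erase i).centerMass w g ∈ P :=
      hP.centerMass_mem hw₀' hr0 fun j hj => hg j (Finset.mem_of_mem_erase hj)
    have hry : (∑ j ∈ t.erase i, w j) • (t.erase i).centerMass w g
        = ∑ j ∈ t.erase i, w j • g j := by
      rw [Finset.centerMass, smul_smul, mul_inv_cancel₀ hr0.ne', one_smul]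
    exact hPF.2 (hg i hi) hyP hF ⟨w i, _, hwi, hr0, hr, by rw [hry, hsum]⟩

theorem IsExtreme.convexHull_inter_eq {s : Set V} (hF : IsExtreme 𝕜 (convexHull 𝕜 s) F)
    (hFc : Convex 𝕜 F) : convexHull 𝕜 (s ∩ F) = F := by
  refine (convexHull_min Set.inter_subset_right hFc).antisymm fun x hx => ?_
  obtain ⟨ι, _, w, g, hw₀, hw₁, hg, rfl⟩ := mem_convexHull_iff_exists_fintype.1 (hF.1 hx)
  have hgF : ∀ i, w i ≠ 0 → g i ∈ F := fun i hi =>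
    hF.mem_of_sum_smul_mem (convex_convexHull 𝕜 s) (fun j _ => hw₀ j) hw₁
      (fun j _ => subset_convexHull 𝕜 s (hg j)) hx (Finset.mem_univ i) ((hw₀ i).lt_of_ne' hi)
  rw [← Finset.centerMass_eq_of_sum_1 _ _ hw₁, ← Finset.centerMass_filter_ne_zero]
  refine Finset.centerMass_mem_convexHull _ (fun i _ => hw₀ i) ?_
    fun i hi => ⟨hg i, hgF i (Finset.mem_filter.1 hi).2⟩
  rw [Finset.sum_filter_ne_zero, hw₁]
  exact one_pos

theorem IsExtreme.notMem_affineSpan (hPF : IsExtreme 𝕜 P F) (hF : Convex 𝕜 F) {z : V}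
    (hzP : z ∈ P) (hzF : z ∉ F) : z ∉ affineSpan 𝕜 F := by
  intro hz
  rw [← Subtype.range_coe (s := F)] at hz
  obtain ⟨t, d, hd₁, hzd⟩ := eq_affineCombination_of_mem_affineSpan hz
  rw [Finset.affineCombination_eq_linear_combination _ _ _ hd₁] at hzd
  set tp := t.filter (0 < d ·)
  set tn := t.filter (¬ 0 < d ·)
  set a := ∑ i ∈ tp, d i
  set b := ∑ i ∈ tn, d i
  have hdn : ∀ i ∈ tn, d i ≤ 0 := fun i hi => not_lt.1 (Finset.mem_filter.1 hi).2
  have hab : ∑ i ∈ tp, d i + ∑ i ∈ tn, d i = 1 := by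
    rw [Finset.sum_filter_add_sum_filter_not, hd₁]
  have hsplit : ∑ i ∈ tp, d i • (i : V) = z - ∑ i ∈ tn, d i • (i : V) := by
    rw [hzd, ← Finset.sum_filter_add_sum_filter_not t (0 < d ·)]
    abel
  have hpF : tp.centerMass d (↑) ∈ F :=
    hF.centerMass_mem (fun i hi => (Finset.mem_filter.1 hi).2.le)
      (by linarith [Finset.sum_nonpos hdn]) fun i _ => i.2
  rcases (Finset.sum_nonpos hdn).eq_or_lt with hb | hb
  · have hrest : ∑ i ∈ tn, d i • (i : V) = 0 := Finset.sum_eq_zero fun i hi => by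
      rw [(Finset.sum_eq_zero_iff_of_nonpos hdn).1 hb i hi, zero_smul]
    rw [Finset.centerMass_eq_of_sum_1 _ _ (by linarith), hsplit, hrest, sub_zero] at hpF
    exact hzF hpF
  · have hqF : tn.centerMass d (↑) ∈ F := by
      rw [← Finset.centerMass_neg_left]
      exact hF.centerMass_mem (fun i hi => neg_nonneg.2 (hdn i hi))
        (by simpa using hb) fun i _ => i.2
    -- the barycenters `p`, `q` of the positive and negative parts satisfy
    -- `p = a⁻¹ • z + (-b / a) • q` with `a > 0 > b` and `a + b = 1`, so `p ∈ openSegment z q`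
    have ha : 0 < a := by linarith
    refine hzF (hPF.2 hzP (hPF.1 hqF) hpF ⟨a⁻¹, -b / a, inv_pos.2 ha, div_pos (by linarith) ha,
      by field_simp; linarith, ?_⟩)
    rw [Finset.centerMass, Finset.centerMass, hsplit, smul_smul, smul_sub, sub_eq_add_neg,
      ← neg_smul]
    congr 2
    change -b / a * b⁻¹ = -a⁻¹
    rw [div_mul_eq_mul_div, neg_mul, mul_inv_cancel₀ hb.ne, neg_div, one_div]

theorem IsExtreme.eq_of_zero_mem (hPF : IsExtreme 𝕜 P F) (hneg : ∀ x ∈ P, -x ∈ P)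
    (h0 : (0 : V) ∈ F) : F = P := by
  refine hPF.1.antisymm fun x hx => hPF.2 hx (hneg x hx) h0 ⟨2⁻¹, 2⁻¹, ?_, ?_, ?_, ?_⟩ <;>
    norm_num

end ExtremeSets

theorem span_eq_iSup_span_filter {R M ι : Type*} [Semiring R] [AddCommMonoid M] [Module R M]
    {W : ι → Submodule R M} {S : Finset M} (hS : ∀ v ∈ S, ∃ i, v ∈ W i) :
    span R (S : Set M) = ⨆ i, span R (S.filter (· ∈ W i) : Set M) := by
  rw [← span_iUnion]
  congr 1
  ext v
  simp only [Set.mem_iUnion, Finset.coe_filter, Set.mem_ofPred_eq, Finset.mem_coe]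
  exact ⟨fun hv => (hS v hv).imp fun i hi => ⟨hv, hi⟩, fun ⟨_, hv, _⟩ => hv⟩

theorem finrank_span_eq_finrank_vectorSpan_add_one {K W : Type*} [Field K] [AddCommGroup W]
    [Module K W] [FiniteDimensional K W] {s : Set W} {v : W} (hv : v ∈ s)
    (hvs : v ∉ vectorSpan K s) :
    finrank K (span K s) = finrank K (vectorSpan K s) + 1 := by
  suffices span K s = vectorSpan K s ⊔ K ∙ v by rw [this, finrank_sup_span_singleton hvs]
  refine le_antisymm (span_le.2 fun x hx => ?_) (sup_le ?_ (span_mono (by simpa using hv)))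
  · rw [← sub_add_cancel x v]
    exact add_mem (mem_sup_left (vsub_mem_vectorSpan K hx hv))
      (mem_sup_right (mem_span_singleton_self v))
  · rw [vectorSpan_def, span_le]
    rintro _ ⟨a, ha, b, hb, rfl⟩
    exact sub_mem (subset_span ha) (subset_span hb)

section

variable {V : Type*} [NormedAddCommGroup V] [InnerProductSpace ℝ V]

theorem IsRootSystem.neg_mem {Φ : Finset V} (hΦ : IsRootSystem Φ) {γ : V} (hγ : γ ∈ Φ) :
    -γ ∈ Φ := by
  have hγγ : ⟪γ, γ⟫ ≠ 0 := inner_self_ne_zero.2 (hΦ.nonzero γ hγ)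
  have h := hΦ.reflect γ hγ γ hγ
  rwa [mul_div_assoc, div_self hγγ, mul_one, two_smul, sub_add_cancel_left] at h

theorem IsRootSystem.neg_mem_convexHull {Φ : Finset V} (hΦ : IsRootSystem Φ) {x : V}
    (hx : x ∈ convexHull ℝ (Φ : Set V)) : -x ∈ convexHull ℝ (Φ : Set V) := by
  refine convexHull_mono (fun y hy => ?_) (by rw [convexHull_neg]; exact Set.neg_mem_neg.2 hx)
  simpa using hΦ.neg_mem (Set.mem_neg.1 hy)

theorem IsRootSystem.zero_notMem_affineSpan_of_isFace {Φ : Finset V} (hΦ : IsRootSystem Φ)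
    {F : Set V} (hF : IsFace (convexHull ℝ (Φ : Set V)) F)
    (hproper : F ≠ convexHull ℝ (Φ : Set V)) : (0 : V) ∉ affineSpan ℝ F := by
  obtain ⟨x, hxP, -⟩ := Set.exists_of_ssubset (hF.1.1.ssubset_of_ne hproper)
  have h0P : (0 : V) ∈ convexHull ℝ (Φ : Set V) := by
    simpa using convex_convexHull ℝ (Φ : Set V) hxP (hΦ.neg_mem_convexHull hxP)
      (by norm_num : (0 : ℝ) ≤ 2⁻¹) (by norm_num : (0 : ℝ) ≤ 2⁻¹) (by norm_num)
  exact hF.1.notMem_affineSpan hF.2 h0P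
    fun h0 => hproper (hF.1.eq_of_zero_mem (fun _ => hΦ.neg_mem_convexHull) h0)

theorem convexHull_inter_eq_of_isOrtho {ι : Type*} {W : ι → Submodule ℝ V}
    (hW : Pairwise fun i j => W i ⟂ W j) {S : Finset V} (hS : ∀ v ∈ S, ∃ j, v ∈ W j)
    (h0 : (0 : V) ∉ convexHull ℝ (S : Set V)) (i : ι) :
    convexHull ℝ (S : Set V) ∩ W i = convexHull ℝ ↑(S.filter (· ∈ W i)) := by
  refine subset_antisymm (fun x ⟨hx, hxi⟩ => ?_) (Set.subset_inter
    (convexHull_mono (Finset.coe_subset.2 (Finset.filter_subset _ S)))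
    (convexHull_min (fun y hy => (Finset.mem_filter.1 hy).2) (W i).convex))
  obtain ⟨w, hw₀, hw₁, rfl⟩ := Finset.mem_convexHull'.1 hx
  -- a point `y ∈ W j`, `j ≠ i`, of positive weight would make `0` the barycenter of the weighted
  -- points of `S` in `W j`: their sum lies in `W j` and, by orthogonality, also in `(W j)ᗮ`
  have hsupp : ∀ y ∈ S, w y ≠ 0 → y ∈ W i := by
    intro y hy hwy
    by_contra hyi
    obtain ⟨j, hyj⟩ := hS y hy
    have hji : j ≠ i := by rintro rfl; exact hyi hyj
    set T := S.filter (· ∈ W j)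
    have hpj : ∑ z ∈ T, w z • z ∈ W j :=
      sum_mem fun z hz => smul_mem _ _ (Finset.mem_filter.1 hz).2
    have hrest : ∑ z ∈ S.filter (· ∉ W j), w z • z ∈ (W j)ᗮ := sum_mem fun z hz => by
      obtain ⟨l, hzl⟩ := hS z (Finset.mem_filter.1 hz).1
      have hlj : l ≠ j := by rintro rfl; exact (Finset.mem_filter.1 hz).2 hzl
      exact smul_mem _ _ ((hW hlj).le hzl)
    have hp0 : ∑ z ∈ T, w z • z = 0 := by
      have hx' : ∑ z ∈ T, w z • z + ∑ z ∈ S.filter (· ∉ W j), w z • z ∈ (W j)ᗮ := by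
        rw [Finset.sum_filter_add_sum_filter_not]; exact (hW hji).symm.le hxi
      have := (Submodule.add_mem_iff_left _ hrest).1 hx'
      exact (mem_bot ℝ).1 ((orthogonal_disjoint (W j)).le_bot ⟨hpj, this⟩)
    have hmass : 0 < ∑ z ∈ T, w z :=
      Finset.sum_pos' (fun z hz => hw₀ z (Finset.mem_filter.1 hz).1) ⟨y, Finset.mem_filter.2 ⟨hy, hyj⟩, (hw₀ y hy).lt_of_ne' hwy⟩
    refine h0 (convexHull_mono (Finset.coe_subset.2 (Finset.filter_subset (· ∈ W j) S)) ?_)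
    have hc := Finset.centerMass_id_mem_convexHull T
      (fun z hz => hw₀ z (Finset.mem_filter.1 hz).1) hmass
    rwa [Finset.centerMass, Function.id_def, hp0, smul_zero] at hc
  refine Finset.mem_convexHull'.2 ⟨w, fun y hy => hw₀ y (Finset.mem_filter.1 hy).1, ?_, ?_⟩
  · rwa [Finset.sum_filter_of_ne fun y hy hwy => hsupp y hy hwy]
  · exact Finset.sum_filter_of_ne fun y hy hwy => hsupp y hy (left_ne_zero_of_smul hwy)

end

theorem edim_convexHull_of_zero_notMem_affineSpan {s : Set E}
    (hs : (0 : E) ∉ affineSpan ℝ s) : edim (convexHull ℝ s) = finrank ℝ (span ℝ s) - 1 := by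
  rcases s.eq_empty_or_nonempty with rfl | ⟨v, hv⟩
  · simp [edim, finrank_eq_zero.2 (span_empty (R := ℝ) (M := E))]
  have hvs : v ∉ vectorSpan ℝ s := fun h => hs <| by
    rw [← AffineSubspace.vsub_right_mem_direction_iff_mem (mem_affineSpan ℝ hv),
      direction_affineSpan]
    simpa using neg_mem h
  rw [edim, if_neg (convexHull_nonempty_iff.2 ⟨v, hv⟩).ne_empty, ← direction_affineSpan,
    affineSpan_convexHull, direction_affineSpan, finrank_span_eq_finrank_vectorSpan_add_one hv hvs]
  push_cast
  ring

theorem finrank_finsetSup_eq_sum_of_isOrtho {ι : Type*} {W : ι → Submodule ℝ E}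
    (hW : Pairwise fun i j => W i ⟂ W j) (s : Finset ι) :
    finrank ℝ ↥(s.sup W) = ∑ i ∈ s, finrank ℝ ↥(W i) := by
  induction s using Finset.cons_induction with
  | empty => simp
  | cons a s ha ih =>
    have hdisj : Disjoint (W a) (s.sup W) := (Submodule.isOrtho_iff_le.2 <| Finset.sup_le
      fun i hi => (hW <| by rintro rfl; exact ha hi).symm.le).symm.disjoint
    rw [Finset.sup_cons, Finset.sum_cons, ← ih, ← finrank_sup_add_finrank_inf_eq,
      hdisj.eq_bot, finrank_bot, add_zero]

theorem finrank_iSup_eq_sum_of_isOrtho {ι : Type*} [Fintype ι] {W : ι → Submodule ℝ E}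
    (hW : Pairwise fun i j => W i ⟂ W j) : finrank ℝ ↥(⨆ i, W i) = ∑ i, finrank ℝ ↥(W i) := by
  rw [← Finset.sup_univ_eq_iSup, finrank_finsetSup_eq_sum_of_isOrtho hW]

theorem finrank_span_eq_sum_of_isOrtho {ι : Type*} [Fintype ι] {W : ι → Submodule ℝ E}
    (hW : Pairwise fun i j => W i ⟂ W j) {S : Finset E} (hS : ∀ v ∈ S, ∃ i, v ∈ W i) :
    finrank ℝ (span ℝ (S : Set E)) = ∑ i, finrank ℝ (span ℝ (S.filter (· ∈ W i) : Set E)) := by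
  have hSW : ∀ i, ((S.filter (· ∈ W i) : Finset E) : Set E) ⊆ W i :=
    fun i v hv => (Finset.mem_filter.1 hv).2
  rw [span_eq_iSup_span_filter hS, finrank_iSup_eq_sum_of_isOrtho fun i j hij =>
    (hW hij).mono (span_le.2 (hSW i)) (span_le.2 (hSW j))]

theorem stmt3_general (k : ℕ) (Esub : Fin k → Submodule ℝ E) (Φ : Finset E)
    (hΦ : IsRootSystem Φ)
    (horth : ∀ i j, i ≠ j → ∀ x ∈ Esub i, ∀ y ∈ Esub j, ⟪x, y⟫ = 0)
    (hcover : (Φ : Set E) = ⋃ i, ((Φ : Set E) ∩ (Esub i : Set E)))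
    (F : Set E) (hF : IsFace (convexHull ℝ (Φ : Set E)) F)
    (hproper : F ≠ convexHull ℝ (Φ : Set E)) :
    edim F = (k : ℤ) - 1 + ∑ i : Fin k, edim (F ∩ (Esub i : Set E)) := by
  set V := Φ.filter (· ∈ F)
  have hortho : Pairwise fun i j => Esub i ⟂ Esub j :=
    fun i j hij => isOrtho_iff_inner_eq.2 (horth i j hij)
  have hVE : ∀ v ∈ V, ∃ i, v ∈ Esub i := fun v hv => by
    obtain ⟨i, -, hvi⟩ := Set.mem_iUnion.1 (hcover.subset (Finset.mem_filter.1 hv).1)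
    exact ⟨i, hvi⟩
  have hVF : convexHull ℝ (V : Set E) = F := by
    rw [Finset.coe_filter]
    exact hF.1.convexHull_inter_eq hF.2
  have h0V : (0 : E) ∉ affineSpan ℝ (V : Set E) := by
    rw [← affineSpan_convexHull, hVF]
    exact hΦ.zero_notMem_affineSpan_of_isFace hF hproper
  have hdim : ∀ i, edim (F ∩ Esub i) = finrank ℝ (span ℝ (V.filter (· ∈ Esub i) : Set E)) - 1 :=
    fun i => by
      have hFi := convexHull_inter_eq_of_isOrtho hortho hVE
        (fun h0 => h0V (convexHull_subset_affineSpan _ h0)) i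
      rw [hVF] at hFi
      rw [hFi]
      exact edim_convexHull_of_zero_notMem_affineSpan fun h0 => h0V <|
        affineSpan_mono ℝ (Finset.coe_subset.2 (Finset.filter_subset _ V)) h0
  conv_lhs => rw [← hVF]
  rw [edim_convexHull_of_zero_notMem_affineSpan h0V, finrank_span_eq_sum_of_isOrtho hortho hVE]
  simp only [hdim, Finset.sum_sub_distrib, Finset.sum_const, Finset.card_univ, Fintype.card_fin]
  push_cast
  ring

/-- Dimension formula for a proper face of the root polytope of a root system with
irreducible components `Φ ∩ Eᵢ`: `dim F = k - 1 + Σᵢ dim (F ∩ Eᵢ)`. -/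
theorem stmt3 (k : ℕ) (Esub : Fin k → Submodule ℝ E) (Φ : Finset E)
    (hΦ : IsRootSystem Φ)
    (horth : ∀ i j, i ≠ j → ∀ x ∈ Esub i, ∀ y ∈ Esub j, ⟪x, y⟫ = 0)
    (hspan : ∀ i, Submodule.span ℝ ((Φ : Set E) ∩ (Esub i : Set E)) = Esub i)
    (hcover : (Φ : Set E) = ⋃ i, ((Φ : Set E) ∩ (Esub i : Set E)))
    (hne : ∀ i, ((Φ : Set E) ∩ (Esub i : Set E)).Nonempty)
    (hirr : ∀ i, IsIrredSet ((Φ : Set E) ∩ (Esub i : Set E)))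
    (F : Set E) (hF : IsFace (convexHull ℝ (Φ : Set E)) F)
    (hproper : F ≠ convexHull ℝ (Φ : Set E)) :
    edim F = (k : ℤ) - 1 + ∑ i : Fin k, edim (F ∩ (Esub i : Set E)) :=
  stmt3_general k Esub Φ hΦ horth hcover F hF hproper
end

section
/- Let Φ be an irreducible crystallographic root system with simple system Π, S ⊆ Π, and β ∈ Φ⁺ with supp(β) ∩ S ≠ ∅. Then Φ_{S,ℤβ} = {γ ∈ Φ : there exists k ∈ ℤ with c_α(γ) = k·c_α(β) for all α ∈ S} is a root subsystem of Φ (closed under the root system axioms: it is symmetric and closed under reflections of its elements). -/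
open scoped RealInnerProductSpace
attribute [local instance] Classical.propDecidable

variable {E : Type*} [NormedAddCommGroup E] [InnerProductSpace ℝ E] [FiniteDimensional ℝ E]

/-- `Δ` is a simple system (base) for `Φ`, and `c γ a` is the coordinate of `γ`
on the simple root `a`. -/
structure IsBase (Φ Δ : Finset E) (c : E → E → ℝ) : Prop where
  subset : Δ ⊆ Φ
  indep : LinearIndependent ℝ (fun x : (Δ : Set E) => (x : E))
  repr : ∀ γ ∈ Φ, γ = ∑ a ∈ Δ, c γ a • a
  int : ∀ γ ∈ Φ, ∀ a ∈ Δ, ∃ n : ℤ, c γ a = (n : ℝ)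
  sign : ∀ γ ∈ Φ, (∀ a ∈ Δ, 0 ≤ c γ a) ∨ (∀ a ∈ Δ, c γ a ≤ 0)

/-- Irreducibility: no splitting into two nonempty mutually orthogonal parts. -/
def IsIrredSys (Φ : Finset E) : Prop :=
  ∀ s : Set E, s ⊆ (Φ : Set E) → (∀ x ∈ s, ∀ y ∈ (Φ : Set E) \ s, ⟪x, y⟫ = 0) →
    s = ∅ ∨ s = (Φ : Set E)

/-- `Φ_{S,ℤβ}`: roots whose coordinates on `S` are a common integer multiple of those of `β`. -/
def levZ (Φ : Finset E) (c : E → E → ℝ) (S : Finset E) (β : E) : Set E :=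
  {γ | γ ∈ Φ ∧ ∃ k : ℤ, ∀ a ∈ S, c γ a = (k : ℝ) * c β a}

/-- Linear independence of the base gives vanishing of coefficients. -/
lemma base_sum_eq_zero {Δ : Finset E}
    (h : LinearIndependent ℝ (fun x : (Δ : Set E) => (x : E)))
    (f : E → ℝ) (hf : ∑ a ∈ Δ, f a • a = 0) : ∀ a ∈ Δ, f a = 0 := by
  intro a ha
  exact linearIndependent_iff'.mp h Finset.univ (fun x => f x)
    (by rw [← hf]; exact (Finset.sum_coe_sort Δ (fun a => f a • a)).symm ▸ rfl)
    ⟨a, ha⟩ (Finset.mem_univ _)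

/-- Uniqueness of coordinates on the base. -/
lemma coord_eq {Φ Δ : Finset E} {c : E → E → ℝ} (hB : IsBase Φ Δ c)
    {v : E} (hv : v ∈ Φ) (f : E → ℝ) (hf : v = ∑ a ∈ Δ, f a • a) :
    ∀ a ∈ Δ, c v a = f a := by
  intro a ha
  have h0 : ∑ a ∈ Δ, (c v a - f a) • a = 0 := by
    simp only [sub_smul, Finset.sum_sub_distrib]
    rw [← hB.repr v hv, ← hf, sub_self]
  have h := base_sum_eq_zero hB.indep (fun a => c v a - f a) h0 a ha
  have : c v a - f a = 0 := h
  linarith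

/-- `Φ_{S,ℤβ}` is a root subsystem of `Φ`: it is symmetric and closed under the
reflections in its elements. -/
theorem stmt4 (Φ Δ : Finset E) (c : E → E → ℝ)
    (hΦ : IsRootSystem Φ) (hB : IsBase Φ Δ c) (hirr : IsIrredSys Φ)
    (S : Finset E) (hS : S ⊆ Δ) (β : E) (hβ : β ∈ Φ)
    (hβpos : ∀ a ∈ Δ, 0 ≤ c β a) (hsupp : ∃ a ∈ S, c β a ≠ 0) :
    (∀ γ ∈ levZ Φ c S β, -γ ∈ levZ Φ c S β) ∧
    (∀ γ ∈ levZ Φ c S β, ∀ δ ∈ levZ Φ c S β,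
      δ - (2 * ⟪δ, γ⟫ / ⟪γ, γ⟫) • γ ∈ levZ Φ c S β) := by
  constructor
  · rintro γ ⟨hγ, k, hk⟩
    have hγ0 : γ ≠ 0 := hΦ.nonzero γ hγ
    have hip : ⟪γ, γ⟫ ≠ 0 := fun h => hγ0 (inner_self_eq_zero.mp h)
    have hneg : -γ ∈ Φ := by
      have := hΦ.reflect γ hγ γ hγ
      have h2 : 2 * ⟪γ, γ⟫ / ⟪γ, γ⟫ = (2 : ℝ) := by field_simp
      rw [h2] at this
      convert this using 1
      module
    refine ⟨hneg, -k, fun a haS => ?_⟩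
    have ha := hS haS
    have hco : c (-γ) a = -(c γ a) := by
      refine coord_eq hB hneg (fun a => -(c γ a)) ?_ a ha
      conv_lhs => rw [hB.repr γ hγ]
      simp [neg_smul, Finset.sum_neg_distrib]
    rw [hco, hk a haS]
    push_cast
    ring
  · rintro γ ⟨hγ, kγ, hkγ⟩ δ ⟨hδ, kδ, hkδ⟩
    obtain ⟨n, hn⟩ := hΦ.cry γ hγ δ hδ
    have hε : δ - (2 * ⟪δ, γ⟫ / ⟪γ, γ⟫) • γ ∈ Φ := hΦ.reflect γ hγ δ hδ
    refine ⟨hε, kδ - n * kγ, fun a haS => ?_⟩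
    have ha := hS haS
    have hco : c (δ - (2 * ⟪δ, γ⟫ / ⟪γ, γ⟫) • γ) a = c δ a - (n : ℝ) * c γ a := by
      refine coord_eq hB hε (fun a => c δ a - (n : ℝ) * c γ a) ?_ a ha
      simp only [sub_smul, mul_smul, Finset.sum_sub_distrib, ← Finset.smul_sum]
      rw [← hB.repr γ hγ, ← hB.repr δ hδ, hn]
    rw [hco, hkγ a haS, hkδ a haS]
    push_cast
    ring
end

section
/- Let Φ be an irreducible crystallographic root system with simple system Π, S ⊆ Π, and β ∈ Φ⁺ with supp(β) ∩ S ≠ ∅. Then the set Φ_{S,β} = {γ ∈ Φ : c_α(γ) = c_α(β) for all α ∈ S} is an interval in the root poset: it has a minimum and a maximum, and contains every root between them. -/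
open scoped RealInnerProductSpace
attribute [local instance] Classical.propDecidable

variable {E : Type*} [NormedAddCommGroup E] [InnerProductSpace ℝ E] [FiniteDimensional ℝ E]

/-- `Φ_{S,β}`: roots whose coordinates on every simple root of `S` agree with those of `β`. -/
def lev (Φ : Finset E) (c : E → E → ℝ) (S : Finset E) (β : E) : Set E :=
  {γ | γ ∈ Φ ∧ ∀ a ∈ S, c γ a = c β a}

/-- The root-poset order: `x ≤ y` iff `y - x` is a nonnegative linear combination of
positive roots. -/
def rootLe (Φ Δ : Finset E) (c : E → E → ℝ) (x y : E) : Prop :=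
  ∃ f : E → ℝ, (∀ γ, 0 ≤ f γ) ∧
    y - x = ∑ γ ∈ Φ.filter (fun γ => ∀ a ∈ Δ, 0 ≤ c γ a), f γ • γ

namespace Stmt5Aux
set_option linter.unusedSectionVars false

lemma coords_zero {Δ : Finset E} (hind : LinearIndependent ℝ (fun x : (Δ : Set E) => (x : E)))
    {f : E → ℝ} (h : ∑ a ∈ Δ, f a • a = 0) : ∀ a ∈ Δ, f a = 0 := by
  intro a ha
  have h' : ∑ x ∈ Δ.attach, f (x : E) • (x : E) = 0 := by
    rw [Finset.sum_attach Δ (fun a => f a • a)]; exact h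
  exact linearIndependent_iff'.mp hind Δ.attach (fun x => f x) h' ⟨a, ha⟩ (Finset.mem_attach _ _)

lemma coords_eq {Δ : Finset E} (hind : LinearIndependent ℝ (fun x : (Δ : Set E) => (x : E)))
    {f g : E → ℝ} (h : ∑ a ∈ Δ, f a • a = ∑ a ∈ Δ, g a • a) : ∀ a ∈ Δ, f a = g a := by
  have h0 : ∑ a ∈ Δ, (f a - g a) • a = 0 := by
    simp only [sub_smul, Finset.sum_sub_distrib, h, sub_self]
  intro a ha
  have := coords_zero hind h0 a ha
  linarith

lemma inner_self_pos' {Φ : Finset E} (hΦ : IsRootSystem Φ) {γ : E} (hγ : γ ∈ Φ) :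
    0 < ⟪γ, γ⟫ :=
  lt_of_le_of_ne real_inner_self_nonneg
    (Ne.symm (inner_self_ne_zero.mpr (hΦ.nonzero γ hγ)))

lemma neg_mem {Φ : Finset E} (hΦ : IsRootSystem Φ) {γ : E} (hγ : γ ∈ Φ) : -γ ∈ Φ := by
  have h := hΦ.reflect γ hγ γ hγ
  have hne : ⟪γ, γ⟫ ≠ 0 := ne_of_gt (inner_self_pos' hΦ hγ)
  rw [mul_div_assoc, div_self hne, mul_one] at h
  have he : γ - (2:ℝ) • γ = -γ := by
    rw [two_smul]; abel
  rwa [he] at h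

lemma sub_mem {Φ : Finset E} (hΦ : IsRootSystem Φ) {γ δ : E} (hγ : γ ∈ Φ) (hδ : δ ∈ Φ)
    (hpos : 0 < ⟪γ, δ⟫) (hne : γ ≠ δ) : γ - δ ∈ Φ := by
  obtain ⟨n, hn⟩ := hΦ.cry γ hγ δ hδ
  obtain ⟨m, hm⟩ := hΦ.cry δ hδ γ hγ
  have hγγ := inner_self_pos' hΦ hγ
  have hδδ := inner_self_pos' hΦ hδ
  have hsymm : ⟪δ, γ⟫ = ⟪γ, δ⟫ := real_inner_comm γ δ
  have hnpos : (0:ℝ) < n := by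
    rw [← hn, hsymm]; exact div_pos (by linarith) hγγ
  have hmpos : (0:ℝ) < m := by
    rw [← hm]; exact div_pos (by linarith) hδδ
  have hn1 : 1 ≤ n := by exact_mod_cast hnpos
  have hm1 : 1 ≤ m := by exact_mod_cast hmpos
  have hprod : n * m ≤ 3 := by
    by_contra hlt
    push_neg at hlt
    have h4 : (4:ℝ) ≤ (n:ℝ) * m := by exact_mod_cast hlt
    have hnm : (n:ℝ) * m = 4 * (⟪γ,δ⟫ * ⟪γ,δ⟫) / (⟪γ,γ⟫ * ⟪δ,δ⟫) := by
      rw [← hn, ← hm, hsymm]; field_simp; ring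
    have hCS := real_inner_mul_inner_self_le γ δ
    have hle : (n:ℝ) * m ≤ 4 := by
      rw [hnm, div_le_iff₀ (by positivity)]
      nlinarith
    have heq : (n:ℝ) * m = 4 := le_antisymm hle h4
    have hip : ⟪γ,δ⟫ * ⟪γ,δ⟫ = ⟪γ,γ⟫ * ⟪δ,δ⟫ := by
      rw [hnm] at heq
      field_simp at heq
      nlinarith
    have h1 : ⟪γ,γ⟫ = ‖γ‖^2 := real_inner_self_eq_norm_sq γ
    have h2 : ⟪δ,δ⟫ = ‖δ‖^2 := real_inner_self_eq_norm_sq δ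
    have hnorm : ⟪γ,δ⟫ = ‖γ‖ * ‖δ‖ := by
      nlinarith [norm_nonneg γ, norm_nonneg δ, mul_nonneg (norm_nonneg γ) (norm_nonneg δ)]
    have hpar := inner_eq_norm_mul_iff_real.mp hnorm
    have hnγ : (0:ℝ) < ‖γ‖ := norm_pos_iff.mpr (hΦ.nonzero γ hγ)
    have hnδ : (0:ℝ) < ‖δ‖ := norm_pos_iff.mpr (hΦ.nonzero δ hδ)
    have ht : (‖δ‖ / ‖γ‖) • γ = δ := by
      rw [div_eq_inv_mul, mul_smul, hpar, inv_smul_smul₀ hnγ.ne']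
    rcases hΦ.reduced γ hγ _ (by rw [ht]; exact hδ) with h1' | h1'
    · apply hne
      rw [← ht, h1', one_smul]
    · have hq : (0:ℝ) < ‖δ‖/‖γ‖ := div_pos hnδ hnγ
      rw [h1'] at hq; linarith
  have hcase : n = 1 ∨ m = 1 := by
    by_contra hc
    push_neg at hc
    have : 2 ≤ n := by omega
    have : 2 ≤ m := by omega
    nlinarith
  rcases hcase with h1 | h1
  · have h := hΦ.reflect γ hγ δ hδ
    rw [hn, h1, Int.cast_one, one_smul] at h
    have := neg_mem hΦ h
    rwa [neg_sub] at this
  · have h := hΦ.reflect δ hδ γ hγ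
    rwa [hm, h1, Int.cast_one, one_smul] at h

lemma add_mem' {Φ : Finset E} (hΦ : IsRootSystem Φ) {γ δ : E} (hγ : γ ∈ Φ) (hδ : δ ∈ Φ)
    (hneg : ⟪γ, δ⟫ < 0) (hne : γ ≠ -δ) : γ + δ ∈ Φ := by
  have h := sub_mem hΦ hγ (neg_mem hΦ hδ) (by rw [inner_neg_right]; linarith) hne
  rwa [sub_neg_eq_add] at h

end Stmt5Aux

namespace Stmt5Aux

set_option linter.unusedSectionVars false

variable {Φ Δ : Finset E} {c : E → E → ℝ}

lemma simple_coords (hB : IsBase Φ Δ c) {a : E} (ha : a ∈ Δ) :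
    ∀ b ∈ Δ, c a b = if a = b then 1 else 0 := by
  apply coords_eq hB.indep
  rw [← hB.repr a (hB.subset ha)]
  simp [ite_smul, Finset.sum_ite_eq, ha]

lemma sub_repr (hB : IsBase Φ Δ c) {x y : E} (hx : x ∈ Φ) (hy : y ∈ Φ) :
    y - x = ∑ a ∈ Δ, (c y a - c x a) • a := by
  conv_lhs => rw [hB.repr y hy, hB.repr x hx]
  rw [← Finset.sum_sub_distrib]
  exact Finset.sum_congr rfl fun a _ => (sub_smul _ _ _).symm

lemma simples_nonpos (hΦ : IsRootSystem Φ) (hB : IsBase Φ Δ c) {a b : E}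
    (ha : a ∈ Δ) (hb : b ∈ Δ) (hab : a ≠ b) : ⟪a, b⟫ ≤ 0 := by
  by_contra hip
  push_neg at hip
  have hρ : a - b ∈ Φ := sub_mem hΦ (hB.subset ha) (hB.subset hb) hip hab
  have hco : ∀ x ∈ Δ, c (a - b) x = (if a = x then 1 else 0) - (if b = x then 1 else 0) := by
    apply coords_eq hB.indep
    rw [← hB.repr _ hρ]
    simp only [sub_smul, Finset.sum_sub_distrib, ite_smul, zero_smul, one_smul]
    rw [Finset.sum_ite_eq, Finset.sum_ite_eq, if_pos ha, if_pos hb]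
  have h1 : c (a - b) a = 1 := by rw [hco a ha]; simp [hab.symm]
  have h2 : c (a - b) b = -1 := by rw [hco b hb]; simp [hab]
  rcases hB.sign _ hρ with h | h
  · have := h b hb; linarith
  · have := h a ha; linarith

lemma coords_neg (hB : IsBase Φ Δ c) {γ : E} (hγ : γ ∈ Φ) (hnγ : -γ ∈ Φ) :
    ∀ b ∈ Δ, c (-γ) b = -(c γ b) := by
  apply coords_eq hB.indep
  rw [← hB.repr _ hnγ]
  rw [neg_eq_iff_eq_neg, ← Finset.sum_neg_distrib]
  conv_lhs => rw [hB.repr γ hγ]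
  exact Finset.sum_congr rfl fun a _ => by rw [neg_smul, neg_neg]

lemma coords_add_simple (hB : IsBase Φ Δ c) {γ a : E} (hγa : γ + a ∈ Φ) (hγ : γ ∈ Φ)
    (ha : a ∈ Δ) : ∀ b ∈ Δ, c (γ + a) b = c γ b + (if a = b then 1 else 0) := by
  apply coords_eq hB.indep
  rw [← hB.repr _ hγa]
  simp only [add_smul, Finset.sum_add_distrib, ite_smul, zero_smul, one_smul]
  rw [Finset.sum_ite_eq, if_pos ha, ← hB.repr γ hγ]

lemma coords_sub_simple (hB : IsBase Φ Δ c) {γ a : E} (hγa : γ - a ∈ Φ) (hγ : γ ∈ Φ)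
    (ha : a ∈ Δ) : ∀ b ∈ Δ, c (γ - a) b = c γ b - (if a = b then 1 else 0) := by
  apply coords_eq hB.indep
  rw [← hB.repr _ hγa]
  simp only [sub_smul, Finset.sum_sub_distrib, ite_smul, zero_smul, one_smul]
  rw [Finset.sum_ite_eq, if_pos ha, ← hB.repr γ hγ]

end Stmt5Aux

namespace Stmt5Aux

set_option linter.unusedSectionVars false

variable {Φ Δ : Finset E} {c : E → E → ℝ}

lemma rootLe_refl (Φ Δ : Finset E) (c : E → E → ℝ) (x : E) : rootLe Φ Δ c x x :=
  ⟨fun _ => 0, fun _ => le_refl _, by simp⟩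

lemma rootLe_trans {x y z : E} (h1 : rootLe Φ Δ c x y) (h2 : rootLe Φ Δ c y z) :
    rootLe Φ Δ c x z := by
  obtain ⟨f, hf, hfs⟩ := h1
  obtain ⟨g, hg, hgs⟩ := h2
  refine ⟨fun γ => f γ + g γ, fun γ => add_nonneg (hf γ) (hg γ), ?_⟩
  have : z - x = (y - x) + (z - y) := by abel
  rw [this, hfs, hgs, ← Finset.sum_add_distrib]
  exact Finset.sum_congr rfl fun γ _ => (add_smul _ _ _).symm

lemma rootLe_iff (hB : IsBase Φ Δ c) {x y : E} (hx : x ∈ Φ) (hy : y ∈ Φ) :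
    rootLe Φ Δ c x y ↔ ∀ a ∈ Δ, c x a ≤ c y a := by
  constructor
  · rintro ⟨f, hf, hsum⟩
    set P := Φ.filter (fun γ => ∀ a ∈ Δ, 0 ≤ c γ a) with hP
    have hswap : ∑ ρ ∈ P, f ρ • ρ = ∑ a ∈ Δ, (∑ ρ ∈ P, f ρ * c ρ a) • a := by
      have step1 : ∀ ρ ∈ P, f ρ • ρ = ∑ a ∈ Δ, (f ρ * c ρ a) • a := by
        intro ρ hρ
        have hρΦ : ρ ∈ Φ := (Finset.mem_filter.mp hρ).1
        nth_rewrite 2 [hB.repr ρ hρΦ]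
        rw [Finset.smul_sum]
        exact Finset.sum_congr rfl fun a _ => smul_smul _ _ _
      rw [Finset.sum_congr rfl step1, Finset.sum_comm]
      exact Finset.sum_congr rfl fun a _ => (Finset.sum_smul).symm
    have hyx : y - x = ∑ a ∈ Δ, (∑ ρ ∈ P, f ρ * c ρ a) • a := by rw [hsum, hswap]
    have hco := coords_eq hB.indep ((sub_repr hB hx hy).symm.trans hyx)
    intro a ha
    have h1 := hco a ha
    have h2 : 0 ≤ ∑ ρ ∈ P, f ρ * c ρ a := by
      apply Finset.sum_nonneg
      intro ρ hρ
      exact mul_nonneg (hf ρ) ((Finset.mem_filter.mp hρ).2 a ha)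
    linarith
  · intro hcomp
    set P := Φ.filter (fun γ => ∀ a ∈ Δ, 0 ≤ c γ a) with hP
    have hΔP : Δ ⊆ P := by
      intro a ha
      refine Finset.mem_filter.mpr ⟨hB.subset ha, fun b hb => ?_⟩
      rw [simple_coords hB ha b hb]
      split <;> norm_num
    refine ⟨fun ρ => if ρ ∈ Δ then c y ρ - c x ρ else 0, fun ρ => ?_, ?_⟩
    · simp only []
      split
      · next h => linarith [hcomp ρ h]
      · exact le_refl _
    · rw [sub_repr hB hx hy, ← hP]
      simp only [ite_smul, zero_smul]
      rw [Finset.sum_ite_mem, Finset.inter_eq_right.mpr hΔP]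

end Stmt5Aux

namespace Stmt5Aux

set_option linter.unusedSectionVars false

variable {Φ Δ : Finset E} {c : E → E → ℝ}

lemma dominant_comparable (hΦ : IsRootSystem Φ) (hB : IsBase Φ Δ c) {S : Finset E} (hS : S ⊆ Δ)
    {lam mu : E} (hlam : lam ∈ Φ) (hmu : mu ∈ Φ)
    (hSeq : ∀ s ∈ S, c lam s = c mu s)
    (hsupp' : ∃ s ∈ S, c lam s ≠ 0)
    (hdl : ∀ a ∈ Δ, a ∉ S → 0 ≤ ⟪lam, a⟫)
    (hdm : ∀ a ∈ Δ, a ∉ S → 0 ≤ ⟪mu, a⟫) :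
    (∀ a ∈ Δ, c mu a ≤ c lam a) ∨ (∀ a ∈ Δ, c lam a ≤ c mu a) := by
  by_cases heq : lam = mu
  · left; intro a _; rw [heq]
  have key : 0 < ⟪lam, mu⟫ := by
    by_contra hip
    push_neg at hip
    set p : E → ℝ := fun a => max (c lam a - c mu a) 0 with hp
    set q : E → ℝ := fun a => max (-(c lam a - c mu a)) 0 with hq
    have hp0 : ∀ a, 0 ≤ p a := fun a => le_max_right _ _
    have hq0 : ∀ a, 0 ≤ q a := fun a => le_max_right _ _
    have hpq : ∀ a, c lam a - c mu a = p a - q a := by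
      intro a
      rcases le_total (c lam a - c mu a) 0 with h | h
      · rw [hp, hq]
        simp only []
        rw [max_eq_right h, max_eq_left (neg_nonneg.mpr h)]
        ring
      · rw [hp, hq]
        simp only []
        rw [max_eq_left h, max_eq_right (neg_nonpos.mpr h)]
        ring
    set vp := ∑ a ∈ Δ, p a • a with hvp
    set vq := ∑ a ∈ Δ, q a • a with hvq
    have hv : lam - mu = vp - vq := by
      rw [sub_repr hB hmu hlam, hvp, hvq, ← Finset.sum_sub_distrib]
      exact Finset.sum_congr rfl fun a _ => by rw [← sub_smul, ← hpq]
    have hqS : ∀ s ∈ S, q s = 0 := fun s hs => by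
      rw [hq]; simp only []; rw [hSeq s hs]; simp
    have hpS : ∀ s ∈ S, p s = 0 := fun s hs => by
      rw [hp]; simp only []; rw [hSeq s hs]; simp
    have h1 : 0 ≤ ⟪lam, vq⟫ := by
      rw [hvq, inner_sum]
      apply Finset.sum_nonneg
      intro a ha
      rw [real_inner_smul_right]
      by_cases haS : a ∈ S
      · rw [hqS a haS]; simp
      · exact mul_nonneg (hq0 a) (hdl a ha haS)
    have h2 : 0 ≤ ⟪mu, vp⟫ := by
      rw [hvp, inner_sum]
      apply Finset.sum_nonneg
      intro a ha
      rw [real_inner_smul_right]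
      by_cases haS : a ∈ S
      · rw [hpS a haS]; simp
      · exact mul_nonneg (hp0 a) (hdm a ha haS)
    have h3 : ⟪vq, vp⟫ ≤ 0 := by
      rw [hvq, hvp, sum_inner]
      apply Finset.sum_nonpos
      intro a ha
      rw [real_inner_smul_left, inner_sum]
      simp_rw [real_inner_smul_right]
      rw [Finset.mul_sum]
      apply Finset.sum_nonpos
      intro b hb
      by_cases hab : a = b
      · subst hab
        rcases le_total (c lam a - c mu a) 0 with h | h
        · have hpa : p a = 0 := by rw [hp]; simp only []; exact max_eq_right h
          rw [hpa, zero_mul, mul_zero]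
        · have hqa : q a = 0 := by
            rw [hq]; simp only []; exact max_eq_right (neg_nonpos.mpr h)
          rw [hqa, zero_mul]
      · have hab' : ⟪a, b⟫ ≤ 0 := simples_nonpos hΦ hB ha hb hab
        have : p b * ⟪a, b⟫ ≤ 0 := mul_nonpos_of_nonneg_of_nonpos (hp0 b) hab'
        exact mul_nonpos_of_nonneg_of_nonpos (hq0 a) this
    have hmu_eq : mu = lam - vp + vq := by
      have h' : mu = lam - (vp - vq) := by rw [← hv]; abel
      rw [h']; abel
    have hlam_eq : lam = mu + vp - vq := by rw [hmu_eq]; abel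
    have hXl : ⟪lam, lam⟫ ≤ ⟪lam, vp⟫ := by
      have e : ⟪lam, mu⟫ = ⟪lam, lam⟫ - ⟪lam, vp⟫ + ⟪lam, vq⟫ := by
        conv_lhs => rw [hmu_eq]
        rw [inner_add_right, inner_sub_right]
      linarith
    have hXv : ⟪vp, vp⟫ ≤ ⟪lam, vp⟫ := by
      have e : ⟪lam, vp⟫ = ⟪mu, vp⟫ + ⟪vp, vp⟫ - ⟪vq, vp⟫ := by
        conv_lhs => rw [hlam_eq]
        rw [inner_sub_left, inner_add_left]
      linarith
    have hz : ⟪lam - vp, lam - vp⟫ ≤ 0 := by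
      rw [inner_sub_left, inner_sub_right, inner_sub_right]
      have hc : ⟪vp, lam⟫ = ⟪lam, vp⟫ := real_inner_comm _ _
      linarith
    have hz0 : lam - vp = 0 :=
      inner_self_eq_zero.mp (le_antisymm hz real_inner_self_nonneg)
    have hlamvp : lam = vp := by rwa [sub_eq_zero] at hz0
    obtain ⟨s₀, hs₀S, hs₀⟩ := hsupp'
    have hco : ∀ a ∈ Δ, c lam a = p a := by
      apply coords_eq hB.indep
      rw [← hB.repr lam hlam, ← hvp]
      exact hlamvp
    have hfin := hco s₀ (hS hs₀S)
    rw [hpS s₀ hs₀S] at hfin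
    exact hs₀ hfin
  have hρ : lam - mu ∈ Φ := sub_mem hΦ hlam hmu key heq
  have hco : ∀ a ∈ Δ, c (lam - mu) a = c lam a - c mu a := by
    apply coords_eq hB.indep
    rw [← hB.repr _ hρ]
    exact sub_repr hB hmu hlam
  rcases hB.sign _ hρ with h | h
  · left; intro a ha
    have h1 := h a ha; have h2 := hco a ha; linarith
  · right; intro a ha
    have h1 := h a ha; have h2 := hco a ha; linarith

end Stmt5Aux

namespace Stmt5Aux

set_option linter.unusedSectionVars false

variable {Φ Δ S : Finset E} {c : E → E → ℝ} {β : E}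

lemma raise_mem (hΦ : IsRootSystem Φ) (hB : IsBase Φ Δ c) (hS : S ⊆ Δ)
    {a₀ : E} (ha₀S : a₀ ∈ S) (ha₀ : c β a₀ ≠ 0)
    {γ a : E} (hγ : γ ∈ lev Φ c S β) (ha : a ∈ Δ) (haS : a ∉ S) (hip : ⟪γ, a⟫ < 0) :
    γ + a ∈ lev Φ c S β := by
  have haΦ := hB.subset ha
  have haa₀ : a ≠ a₀ := fun h => haS (h ▸ ha₀S)
  have hca : c a a₀ = 0 := by rw [simple_coords hB ha a₀ (hS ha₀S), if_neg haa₀]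
  have hne : γ ≠ -a := by
    intro h
    have h1 : c γ a₀ = c β a₀ := hγ.2 a₀ ha₀S
    have h2 : c (-a) a₀ = -(c a a₀) := coords_neg hB haΦ (neg_mem hΦ haΦ) a₀ (hS ha₀S)
    rw [h, h2, hca, neg_zero] at h1
    exact ha₀ h1.symm
  have hadd : γ + a ∈ Φ := add_mem' hΦ hγ.1 haΦ hip hne
  refine ⟨hadd, fun s hs => ?_⟩
  rw [coords_add_simple hB hadd hγ.1 ha s (hS hs)]
  have has : a ≠ s := fun h => haS (h ▸ hs)
  rw [if_neg has, add_zero]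
  exact hγ.2 s hs

lemma lower_mem (hΦ : IsRootSystem Φ) (hB : IsBase Φ Δ c) (hS : S ⊆ Δ)
    {a₀ : E} (ha₀S : a₀ ∈ S) (ha₀ : c β a₀ ≠ 0)
    {γ a : E} (hγ : γ ∈ lev Φ c S β) (ha : a ∈ Δ) (haS : a ∉ S) (hip : 0 < ⟪γ, a⟫) :
    γ - a ∈ lev Φ c S β := by
  have haΦ := hB.subset ha
  have haa₀ : a ≠ a₀ := fun h => haS (h ▸ ha₀S)
  have hca : c a a₀ = 0 := by rw [simple_coords hB ha a₀ (hS ha₀S), if_neg haa₀]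
  have hne : γ ≠ a := by
    intro h
    have h1 : c γ a₀ = c β a₀ := hγ.2 a₀ ha₀S
    rw [h, hca] at h1
    exact ha₀ h1.symm
  have hsub : γ - a ∈ Φ := sub_mem hΦ hγ.1 haΦ hip hne
  refine ⟨hsub, fun s hs => ?_⟩
  rw [coords_sub_simple hB hsub hγ.1 ha s (hS hs)]
  have has : a ≠ s := fun h => haS (h ▸ hs)
  rw [if_neg has, sub_zero]
  exact hγ.2 s hs

lemma antidominant_comparable (hΦ : IsRootSystem Φ) (hB : IsBase Φ Δ c) (hS : S ⊆ Δ)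
    {lam mu : E} (hlam : lam ∈ Φ) (hmu : mu ∈ Φ)
    (hSeq : ∀ s ∈ S, c lam s = c mu s)
    (hsupp' : ∃ s ∈ S, c lam s ≠ 0)
    (hdl : ∀ a ∈ Δ, a ∉ S → ⟪lam, a⟫ ≤ 0)
    (hdm : ∀ a ∈ Δ, a ∉ S → ⟪mu, a⟫ ≤ 0) :
    (∀ a ∈ Δ, c mu a ≤ c lam a) ∨ (∀ a ∈ Δ, c lam a ≤ c mu a) := by
  have hnl : -lam ∈ Φ := neg_mem hΦ hlam
  have hnm : -mu ∈ Φ := neg_mem hΦ hmu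
  have hcl := coords_neg hB hlam hnl
  have hcm := coords_neg hB hmu hnm
  have hsupp'' : ∃ s ∈ S, c (-lam) s ≠ 0 := by
    obtain ⟨s, hsS, hs⟩ := hsupp'
    exact ⟨s, hsS, by rw [hcl s (hS hsS)]; simpa using hs⟩
  have hcomp := dominant_comparable hΦ hB hS hnl hnm
    (fun s hs => by rw [hcl s (hS hs), hcm s (hS hs), hSeq s hs])
    hsupp''
    (fun a ha haS => by rw [inner_neg_left]; linarith [hdl a ha haS])
    (fun a ha haS => by rw [inner_neg_left]; linarith [hdm a ha haS])
  rcases hcomp with h | h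
  · right; intro a ha
    have h1 := h a ha
    rw [hcl a ha, hcm a ha] at h1
    linarith
  · left; intro a ha
    have h1 := h a ha
    rw [hcl a ha, hcm a ha] at h1
    linarith

end Stmt5Aux

open Stmt5Aux

/-- `Φ_{S,β}` is an interval of the root poset: it has a minimum and a maximum and
contains every root lying between them. -/
theorem stmt5 (Φ Δ : Finset E) (c : E → E → ℝ)
    (hΦ : IsRootSystem Φ) (hB : IsBase Φ Δ c) (hirr : IsIrredSys Φ)
    (S : Finset E) (hS : S ⊆ Δ) (β : E) (hβ : β ∈ Φ)
    (hβpos : ∀ a ∈ Δ, 0 ≤ c β a) (hsupp : ∃ a ∈ S, c β a ≠ 0) :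
    ∃ m ∈ lev Φ c S β, ∃ M ∈ lev Φ c S β,
      (∀ γ ∈ lev Φ c S β, rootLe Φ Δ c m γ ∧ rootLe Φ Δ c γ M) ∧
      (∀ γ ∈ Φ, rootLe Φ Δ c m γ → rootLe Φ Δ c γ M → γ ∈ lev Φ c S β) := by

  classical
  obtain ⟨a₀, ha₀S, ha₀⟩ := hsupp
  have hβlev : β ∈ lev Φ c S β := ⟨hβ, fun s _ => rfl⟩
  set H : E → ℝ := fun x => ∑ a ∈ Δ, c x a with hH
  -- every element of lev can be raised to an (S-)dominant element above it
  have raise : ∀ γ ∈ lev Φ c S β, ∃ lam, lam ∈ lev Φ c S β ∧ rootLe Φ Δ c γ lam ∧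
      ∀ a ∈ Δ, a ∉ S → 0 ≤ ⟪lam, a⟫ := by
    intro γ hγ
    set T : Finset E := Φ.filter (fun δ => δ ∈ lev Φ c S β ∧ rootLe Φ Δ c γ δ) with hT
    have hne : T.Nonempty := ⟨γ, Finset.mem_filter.mpr ⟨hγ.1, hγ, rootLe_refl Φ Δ c γ⟩⟩
    obtain ⟨lam, hlamT, hmax⟩ := T.exists_max_image H hne
    obtain ⟨hlamΦ, hlamlev, hlamle⟩ := Finset.mem_filter.mp hlamT
    refine ⟨lam, hlamlev, hlamle, ?_⟩
    intro a ha haS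
    by_contra hip
    push_neg at hip
    have hmem := raise_mem hΦ hB hS ha₀S ha₀ hlamlev ha haS hip
    have hstep : rootLe Φ Δ c lam (lam + a) := by
      rw [rootLe_iff hB hlamΦ hmem.1]
      intro b hb
      rw [coords_add_simple hB hmem.1 hlamΦ ha b hb]
      split <;> linarith
    have hT' : lam + a ∈ T :=
      Finset.mem_filter.mpr ⟨hmem.1, hmem, rootLe_trans hlamle hstep⟩
    have hle := hmax _ hT'
    have hHeq : H (lam + a) = H lam + 1 := by
      rw [hH]
      simp only []
      rw [Finset.sum_congr rfl (fun b hb => coords_add_simple hB hmem.1 hlamΦ ha b hb),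
        Finset.sum_add_distrib, Finset.sum_ite_eq, if_pos ha]
    linarith
  -- dually, lower to an antidominant element
  have lower : ∀ γ ∈ lev Φ c S β, ∃ mu, mu ∈ lev Φ c S β ∧ rootLe Φ Δ c mu γ ∧
      ∀ a ∈ Δ, a ∉ S → ⟪mu, a⟫ ≤ 0 := by
    intro γ hγ
    set T : Finset E := Φ.filter (fun δ => δ ∈ lev Φ c S β ∧ rootLe Φ Δ c δ γ) with hT
    have hne : T.Nonempty := ⟨γ, Finset.mem_filter.mpr ⟨hγ.1, hγ, rootLe_refl Φ Δ c γ⟩⟩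
    obtain ⟨mu, hmuT, hmin⟩ := T.exists_min_image H hne
    obtain ⟨hmuΦ, hmulev, hmule⟩ := Finset.mem_filter.mp hmuT
    refine ⟨mu, hmulev, hmule, ?_⟩
    intro a ha haS
    by_contra hip
    push_neg at hip
    have hmem := lower_mem hΦ hB hS ha₀S ha₀ hmulev ha haS hip
    have hstep : rootLe Φ Δ c (mu - a) mu := by
      rw [rootLe_iff hB hmem.1 hmuΦ]
      intro b hb
      rw [coords_sub_simple hB hmem.1 hmuΦ ha b hb]
      split <;> linarith
    have hT' : mu - a ∈ T :=
      Finset.mem_filter.mpr ⟨hmem.1, hmem, rootLe_trans hstep hmule⟩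
    have hle := hmin _ hT'
    have hHeq : H (mu - a) = H mu - 1 := by
      rw [hH]
      simp only []
      rw [Finset.sum_congr rfl (fun b hb => coords_sub_simple hB hmem.1 hmuΦ ha b hb),
        Finset.sum_sub_distrib, Finset.sum_ite_eq, if_pos ha]
    linarith
  -- the maximum
  set D : Finset E := Φ.filter (fun δ => δ ∈ lev Φ c S β ∧ ∀ a ∈ Δ, a ∉ S → 0 ≤ ⟪δ, a⟫) with hD
  obtain ⟨lβ, hlβlev, hlβle, hlβdom⟩ := raise β hβlev
  have hDne : D.Nonempty := ⟨lβ, Finset.mem_filter.mpr ⟨hlβlev.1, hlβlev, hlβdom⟩⟩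
  obtain ⟨M, hMD, hMmax⟩ := D.exists_max_image H hDne
  obtain ⟨hMΦ, hMlev, hMdom⟩ := Finset.mem_filter.mp hMD
  have hMub : ∀ γ ∈ lev Φ c S β, rootLe Φ Δ c γ M := by
    intro γ hγ
    obtain ⟨lam, hlamlev, hγlam, hlamdom⟩ := raise γ hγ
    have hsupp' : ∃ s ∈ S, c M s ≠ 0 := ⟨a₀, ha₀S, by rw [hMlev.2 a₀ ha₀S]; exact ha₀⟩
    have hSeq : ∀ s ∈ S, c M s = c lam s := fun s hs => by
      rw [hMlev.2 s hs, hlamlev.2 s hs]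
    rcases dominant_comparable hΦ hB hS hMΦ hlamlev.1 hSeq hsupp' hMdom hlamdom with h | h
    · exact rootLe_trans hγlam ((rootLe_iff hB hlamlev.1 hMΦ).mpr h)
    · have hlamD : lam ∈ D := Finset.mem_filter.mpr ⟨hlamlev.1, hlamlev, hlamdom⟩
      have h1 : H lam ≤ H M := hMmax _ hlamD
      have h2 : H M ≤ H lam := Finset.sum_le_sum h
      have hsum_eq : ∑ a ∈ Δ, c M a = ∑ a ∈ Δ, c lam a := le_antisymm h2 h1
      have hpt := (Finset.sum_eq_sum_iff_of_le h).mp hsum_eq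
      have hlM : lam = M := by
        rw [hB.repr lam hlamlev.1, hB.repr M hMΦ]
        exact Finset.sum_congr rfl fun a ha => by rw [hpt a ha]
      rwa [hlM] at hγlam
  -- the minimum
  set D' : Finset E := Φ.filter (fun δ => δ ∈ lev Φ c S β ∧ ∀ a ∈ Δ, a ∉ S → ⟪δ, a⟫ ≤ 0) with hD'
  obtain ⟨mβ, hmβlev, hmβle, hmβdom⟩ := lower β hβlev
  have hD'ne : D'.Nonempty := ⟨mβ, Finset.mem_filter.mpr ⟨hmβlev.1, hmβlev, hmβdom⟩⟩
  obtain ⟨m, hmD, hmmin⟩ := D'.exists_min_image H hD'ne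
  obtain ⟨hmΦ, hmlev, hmdom⟩ := Finset.mem_filter.mp hmD
  have hmlb : ∀ γ ∈ lev Φ c S β, rootLe Φ Δ c m γ := by
    intro γ hγ
    obtain ⟨mu, hmulev, hmuγ, hmudom⟩ := lower γ hγ
    have hsupp' : ∃ s ∈ S, c m s ≠ 0 := ⟨a₀, ha₀S, by rw [hmlev.2 a₀ ha₀S]; exact ha₀⟩
    have hSeq : ∀ s ∈ S, c m s = c mu s := fun s hs => by
      rw [hmlev.2 s hs, hmulev.2 s hs]
    rcases antidominant_comparable hΦ hB hS hmΦ hmulev.1 hSeq hsupp' hmdom hmudom with h | h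
    · -- c mu ≤ c m : then mu = m
      have hmuD : mu ∈ D' := Finset.mem_filter.mpr ⟨hmulev.1, hmulev, hmudom⟩
      have h1 : H m ≤ H mu := hmmin _ hmuD
      have h2 : H mu ≤ H m := Finset.sum_le_sum h
      have hsum_eq : ∑ a ∈ Δ, c mu a = ∑ a ∈ Δ, c m a := le_antisymm h2 h1
      have hpt := (Finset.sum_eq_sum_iff_of_le h).mp hsum_eq
      have hlM : mu = m := by
        rw [hB.repr mu hmulev.1, hB.repr m hmΦ]
        exact Finset.sum_congr rfl fun a ha => by rw [hpt a ha]
      rwa [← hlM]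
    · -- c m ≤ c mu
      exact rootLe_trans ((rootLe_iff hB hmΦ hmulev.1).mpr h) hmuγ
  refine ⟨m, hmlev, M, hMlev, fun γ hγ => ⟨hmlb γ hγ, hMub γ hγ⟩, ?_⟩
  intro γ hγΦ h1 h2
  have hc1 := (rootLe_iff hB hmΦ hγΦ).mp h1
  have hc2 := (rootLe_iff hB hγΦ hMΦ).mp h2
  refine ⟨hγΦ, fun s hs => ?_⟩
  have e1 : c m s = c β s := hmlev.2 s hs
  have e2 : c M s = c β s := hMlev.2 s hs
  have i1 := hc1 s (hS hs)
  have i2 := hc2 s (hS hs)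
  linarith
end

section
/- Let Φ be an irreducible crystallographic root system, S ⊆ Π, β ∈ Φ⁺ with supp(β) ∩ S ≠ ∅. Then max Φ_{S,β} and −min Φ_{S,β} are both (Π\S)-dominant, i.e., (max Φ_{S,β}, α) ≥ 0 and (−min Φ_{S,β}, α) ≥ 0 for all α ∈ Π \ S. -/
/-!
For a simple root `a ∉ S`, the reflection `s_a γ = γ - (2⟪γ, a⟫ / ⟪a, a⟫) • a` changes a root
only in its `a`-coordinate, so it maps `Φ_{S,β}` to itself. Since `M - s_a M` is the multiple
`(2⟪M, a⟫ / ⟪a, a⟫) • a` of `a`, maximality of `M` forces this coefficient to be nonnegative,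
i.e. `0 ≤ ⟪M, a⟫`; symmetrically, minimality of `m` forces `⟪m, a⟫ ≤ 0`.
-/

open scoped RealInnerProductSpace
attribute [local instance] Classical.propDecidable

variable {E : Type*} [NormedAddCommGroup E] [InnerProductSpace ℝ E] [FiniteDimensional ℝ E]

lemma LinearIndepOn.exists_dual_apply_eq_one_and_eq_zero {K V : Type*} [Field K]
    [AddCommGroup V] [Module K V] {s : Set V} (hs : LinearIndepOn K id s) {a : V} (ha : a ∈ s) :
    ∃ ℓ : V →ₗ[K] K, ℓ a = 1 ∧ ∀ b ∈ s, b ≠ a → ℓ b = 0 := by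
  let B := Module.Basis.extend hs
  let i : hs.extend (Set.subset_univ s) := ⟨a, hs.subset_extend _ ha⟩
  have hcoord : ∀ b (hb : b ∈ s), B.coord i b = Finsupp.single ⟨b, hs.subset_extend _ hb⟩ 1 i :=
    fun b hb ↦ calc
      B.coord i b = B.coord i (B ⟨b, hs.subset_extend _ hb⟩) := by
        rw [Module.Basis.extend_apply_self]
      _ = _ := by rw [Module.Basis.coord_apply, Module.Basis.repr_self]
  refine ⟨B.coord i, ?_, fun b hb hba ↦ ?_⟩
  · rw [hcoord a ha, Finsupp.single_eq_same]
  · rw [hcoord b hb, Finsupp.single_eq_of_ne (fun h ↦ hba (congrArg Subtype.val h).symm)]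

variable {V : Type*} [NormedAddCommGroup V] [InnerProductSpace ℝ V]
variable {Φ Δ : Finset V} {c : V → V → ℝ} {a : V}

namespace IsBase

lemma exists_dual_apply_eq_coord (hB : IsBase Φ Δ c) (ha : a ∈ Δ) :
    ∃ ℓ : V →ₗ[ℝ] ℝ, ℓ a = 1 ∧ (∀ b ∈ Δ, b ≠ a → ℓ b = 0) ∧ ∀ γ ∈ Φ, ℓ γ = c γ a := by
  obtain ⟨ℓ, h1, h0⟩ := LinearIndepOn.exists_dual_apply_eq_one_and_eq_zero hB.indep ha
  refine ⟨ℓ, h1, h0, fun γ hγ ↦ ?_⟩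
  calc ℓ γ = ℓ (∑ b ∈ Δ, c γ b • b) := by rw [← hB.repr γ hγ]
    _ = ∑ b ∈ Δ, c γ b * ℓ b := by simp only [map_sum, map_smul, smul_eq_mul]
    _ = c γ a := by
        rw [Finset.sum_eq_single_of_mem a ha fun b hb hba ↦ by rw [h0 b hb hba, mul_zero],
          h1, mul_one]

lemma coord_sub_smul_of_ne (hB : IsBase Φ Δ c) (ha : a ∈ Δ) {b : V} (hb : b ∈ Δ) (hba : b ≠ a)
    {x : V} (hx : x ∈ Φ) {t : ℝ} (hxt : x - t • a ∈ Φ) : c (x - t • a) b = c x b := by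
  obtain ⟨ℓ, -, h0, hℓ⟩ := hB.exists_dual_apply_eq_coord hb
  rw [← hℓ _ hxt, ← hℓ x hx, map_sub, map_smul, h0 a ha hba.symm, smul_zero, sub_zero]

lemma nonneg_of_rootLe_of_sub_eq_smul (hB : IsBase Φ Δ c) (ha : a ∈ Δ) {x y : V}
    (hxy : rootLe Φ Δ c x y) {t : ℝ} (h : y - x = t • a) : 0 ≤ t := by
  obtain ⟨ℓ, h1, -, hℓ⟩ := hB.exists_dual_apply_eq_coord ha
  obtain ⟨f, hf, hsum⟩ := hxy
  rw [h] at hsum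
  have : t = ∑ γ ∈ Φ.filter (fun γ ↦ ∀ b ∈ Δ, 0 ≤ c γ b), f γ * ℓ γ := by
    simpa only [map_smul, h1, smul_eq_mul, mul_one, map_sum] using congrArg ℓ hsum
  rw [this]
  refine Finset.sum_nonneg fun γ hγ ↦ ?_
  rw [Finset.mem_filter] at hγ
  rw [hℓ γ hγ.1]
  exact mul_nonneg (hf γ) (hγ.2 a ha)

lemma sub_smul_mem_lev (hB : IsBase Φ Δ c) {S : Finset V} (hS : S ⊆ Δ) (ha : a ∈ Δ)
    (haS : a ∉ S) {β x : V} (hx : x ∈ lev Φ c S β) {t : ℝ} (hxt : x - t • a ∈ Φ) :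
    x - t • a ∈ lev Φ c S β :=
  ⟨hxt, fun b hb ↦ by
    rw [hB.coord_sub_smul_of_ne ha (hS hb) (fun h ↦ haS (h ▸ hb)) hx.1 hxt, hx.2 b hb]⟩

variable {S : Finset V} {β : V}

lemma inner_nonneg_of_isMax (hB : IsBase Φ Δ c) (hΦ : IsRootSystem Φ) (hS : S ⊆ Δ)
    (ha : a ∈ Δ) (haS : a ∉ S) {M : V} (hM : M ∈ lev Φ c S β)
    (hmax : ∀ γ ∈ lev Φ c S β, rootLe Φ Δ c γ M) : 0 ≤ ⟪M, a⟫ := by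
  have haa : 0 < ⟪a, a⟫ := real_inner_self_pos.2 (hΦ.nonzero a (hB.subset ha))
  have hmem := hB.sub_smul_mem_lev hS ha haS hM (hΦ.reflect a (hB.subset ha) M hM.1)
  have hn : 0 ≤ 2 * ⟪M, a⟫ / ⟪a, a⟫ := hB.nonneg_of_rootLe_of_sub_eq_smul ha (hmax _ hmem) (sub_sub_cancel M _)
  rw [le_div_iff₀ haa] at hn
  linarith

lemma inner_nonpos_of_isMin (hB : IsBase Φ Δ c) (hΦ : IsRootSystem Φ) (hS : S ⊆ Δ)
    (ha : a ∈ Δ) (haS : a ∉ S) {m : V} (hm : m ∈ lev Φ c S β)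
    (hmin : ∀ γ ∈ lev Φ c S β, rootLe Φ Δ c m γ) : ⟪m, a⟫ ≤ 0 := by
  have haa : 0 < ⟪a, a⟫ := real_inner_self_pos.2 (hΦ.nonzero a (hB.subset ha))
  have hmem := hB.sub_smul_mem_lev hS ha haS hm (hΦ.reflect a (hB.subset ha) m hm.1)
  have hn : 0 ≤ -(2 * ⟪m, a⟫ / ⟪a, a⟫) := hB.nonneg_of_rootLe_of_sub_eq_smul ha (hmin _ hmem)
    (by rw [neg_smul, sub_sub_cancel_left])
  rw [neg_nonneg, div_le_iff₀ haa] at hn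
  linarith

end IsBase

theorem stmt8_general (Φ Δ : Finset E) (c : E → E → ℝ)
    (hΦ : IsRootSystem Φ) (hB : IsBase Φ Δ c)
    (S : Finset E) (hS : S ⊆ Δ) (β : E)
    (m M : E)
    (hm : m ∈ lev Φ c S β ∧ ∀ γ ∈ lev Φ c S β, rootLe Φ Δ c m γ)
    (hM : M ∈ lev Φ c S β ∧ ∀ γ ∈ lev Φ c S β, rootLe Φ Δ c γ M) :
    ∀ a ∈ Δ, a ∉ S → 0 ≤ ⟪M, a⟫ ∧ 0 ≤ ⟪-m, a⟫ := fun a ha haS ↦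
  ⟨hB.inner_nonneg_of_isMax hΦ hS ha haS hM.1 hM.2,
    by rw [inner_neg_left, neg_nonneg]; exact hB.inner_nonpos_of_isMin hΦ hS ha haS hm.1 hm.2⟩

/-- `max Φ_{S,β}` and `-min Φ_{S,β}` are `(Π \ S)`-dominant. -/
theorem stmt8 (Φ Δ : Finset E) (c : E → E → ℝ)
    (hΦ : IsRootSystem Φ) (hB : IsBase Φ Δ c) (hirr : IsIrredSys Φ)
    (S : Finset E) (hS : S ⊆ Δ) (β : E) (hβ : β ∈ Φ)
    (hβpos : ∀ a ∈ Δ, 0 ≤ c β a) (hsupp : ∃ a ∈ S, c β a ≠ 0)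
    (m M : E)
    (hm : m ∈ lev Φ c S β ∧ ∀ γ ∈ lev Φ c S β, rootLe Φ Δ c m γ)
    (hM : M ∈ lev Φ c S β ∧ ∀ γ ∈ lev Φ c S β, rootLe Φ Δ c γ M) :
    ∀ a ∈ Δ, a ∉ S → 0 ≤ ⟪M, a⟫ ∧ 0 ≤ ⟪-m, a⟫ :=
  stmt8_general Φ Δ c hΦ hB S hS β m M hm hM
end

section
/- Let Φ be an irreducible crystallographic root system, S ⊆ Π, β ∈ Φ⁺ with supp(β) ∩ S ≠ ∅. If γ ∈ Φ_{S,β} is (Π\S)-dominant and γ ≠ max Φ_{S,β}, then max Φ_{S,β} is a long root and γ is a short root. Consequently, Φ_{S,β} contains at most one (Π\S)-dominant root of each length. -/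
open scoped RealInnerProductSpace
attribute [local instance] Classical.propDecidable

variable {E : Type*} [NormedAddCommGroup E] [InnerProductSpace ℝ E] [FiniteDimensional ℝ E]

/-!
Since `γ` and `M = max Φ_{S,β}` have the same coordinates on `S`, `M - γ` is a nonnegative
combination of simple roots outside `S`, so a `(Π \ S)`-dominant `γ` has `‖γ‖² ≤ ⟪γ, M⟫`.
The Cartan integers of the pair `(γ, M)` then force `‖M‖² = 2⟪γ, M⟫ ≥ 2‖γ‖²`, and an irreducible
system has only two root lengths, so `M` is long and `γ` short.

For dominant `γ₁ ≠ γ₂` of equal length, neither is the longer `M`: if `⟪γ₁, γ₂⟫ > 0` then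
`γ₁ - γ₂` is a root vanishing on `S`, and pairing it with the dominant `γᵢ` gives the equality
case of Cauchy–Schwarz; if `⟪γ₁, γ₂⟫ ≤ 0`, the same equality case forces `M = γ₁ + γ₂`, which
contradicts `supp β ∩ S ≠ ∅` on the `S`-coordinates.
-/

variable {F : Type*} [NormedAddCommGroup F] [InnerProductSpace ℝ F]

theorem norm_sub_smul_eq_of_two_inner_eq {x y : F} {k : ℝ} (hk : 2 * ⟪x, y⟫ = k * ‖y‖ ^ 2) :
    ‖x - k • y‖ = ‖x‖ := by
  refine (sq_eq_sq₀ (norm_nonneg _) (norm_nonneg _)).mp ?_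
  rw [norm_sub_sq_real, real_inner_smul_right, norm_smul, mul_pow, Real.norm_eq_abs, sq_abs]
  linear_combination (-k) * hk

theorem eq_of_norm_le_of_sq_norm_le_inner {x y : F} (hyx : ‖y‖ ≤ ‖x‖) (h : ‖x‖ ^ 2 ≤ ⟪x, y⟫) :
    x = y := by
  have hsq : ‖x - y‖ ^ 2 ≤ 0 := by
    rw [norm_sub_sq_real]
    nlinarith [norm_nonneg y]
  rw [← sub_eq_zero, ← norm_eq_zero]
  nlinarith [norm_nonneg (x - y)]

theorem mul_mul_sq_norm_eq_four_mul_inner_sq {x y : F} {n m : ℝ}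
    (hn : 2 * ⟪x, y⟫ = n * ‖x‖ ^ 2) (hm : 2 * ⟪x, y⟫ = m * ‖y‖ ^ 2) :
    n * m * (‖x‖ ^ 2 * ‖y‖ ^ 2) = 4 * ⟪x, y⟫ ^ 2 := by
  linear_combination (-(m * ‖y‖ ^ 2)) * hn - 2 * ⟪x, y⟫ * hm

namespace IsRootSystem

variable {Φ : Finset F} {α β γ δ : F}

theorem sq_norm_pos (hΦ : IsRootSystem Φ) (hα : α ∈ Φ) : 0 < ‖α‖ ^ 2 := by
  have := hΦ.nonzero α hα
  positivity

theorem sub_smul_mem (hΦ : IsRootSystem Φ) (hγ : γ ∈ Φ) (hδ : δ ∈ Φ) {k : ℝ}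
    (hk : 2 * ⟪δ, γ⟫ = k * ‖γ‖ ^ 2) : δ - k • γ ∈ Φ := by
  have hγ0 := (hΦ.sq_norm_pos hγ).ne'
  convert hΦ.reflect γ hγ δ hδ using 2
  rw [real_inner_self_eq_norm_sq, hk, mul_div_cancel_right₀ _ hγ0]

theorem neg_mem_s9 (hΦ : IsRootSystem Φ) (hα : α ∈ Φ) : -α ∈ Φ := by
  convert hΦ.sub_smul_mem hα hα (k := 2) (by rw [real_inner_self_eq_norm_sq]) using 1
  rw [two_smul]
  abel

theorem exists_int_two_inner_eq (hΦ : IsRootSystem Φ) (hα : α ∈ Φ) (hβ : β ∈ Φ) :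
    ∃ n m : ℤ, 2 * ⟪α, β⟫ = n * ‖α‖ ^ 2 ∧ 2 * ⟪α, β⟫ = m * ‖β‖ ^ 2 := by
  obtain ⟨n, hn⟩ := hΦ.cry α hα β hβ
  obtain ⟨m, hm⟩ := hΦ.cry β hβ α hα
  refine ⟨n, m, ?_, ?_⟩
  · rw [← hn, real_inner_self_eq_norm_sq, real_inner_comm,
      div_mul_cancel₀ _ (hΦ.sq_norm_pos hα).ne']
  · rw [← hm, real_inner_self_eq_norm_sq, div_mul_cancel₀ _ (hΦ.sq_norm_pos hβ).ne']

theorem inner_sq_lt (hΦ : IsRootSystem Φ) (hα : α ∈ Φ) (hβ : β ∈ Φ) (hβα : β ≠ α)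
    (hβα' : β ≠ -α) : ⟪α, β⟫ ^ 2 < ‖α‖ ^ 2 * ‖β‖ ^ 2 := by
  refine lt_of_le_of_ne ?_ fun h => ?_
  · rw [← mul_pow, ← sq_abs]
    exact pow_le_pow_left₀ (abs_nonneg _) (abs_real_inner_le_norm α β) 2
  · have hnorm : ‖⟪α, β⟫‖ = ‖α‖ * ‖β‖ := by
      rw [Real.norm_eq_abs, ← sq_eq_sq₀ (abs_nonneg _) (by positivity), sq_abs, mul_pow, h]
    obtain ⟨r, -, hr⟩ :=
      (norm_inner_eq_norm_iff (hΦ.nonzero α hα) (hΦ.nonzero β hβ)).mp hnorm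
    rcases hΦ.reduced α hα r (hr ▸ hβ) with rfl | rfl
    · exact hβα (by simpa using hr)
    · exact hβα' (by simpa using hr)

theorem int_mul_lt_four (hΦ : IsRootSystem Φ) (hα : α ∈ Φ) (hβ : β ∈ Φ) (hβα : β ≠ α)
    (hβα' : β ≠ -α) {n m : ℤ} (hn : 2 * ⟪α, β⟫ = n * ‖α‖ ^ 2) (hm : 2 * ⟪α, β⟫ = m * ‖β‖ ^ 2) :
    n * m < 4 := by
  have hlt := hΦ.inner_sq_lt hα hβ hβα hβα'
  have hpos := mul_pos (hΦ.sq_norm_pos hα) (hΦ.sq_norm_pos hβ)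
  have hprod := mul_mul_sq_norm_eq_four_mul_inner_sq hn hm
  have : (n : ℝ) * m < 4 := by nlinarith
  exact_mod_cast this

theorem sub_mem_of_inner_pos (hΦ : IsRootSystem Φ) (hα : α ∈ Φ) (hβ : β ∈ Φ) (hαβ : α ≠ β)
    (hpos : 0 < ⟪α, β⟫) : α - β ∈ Φ := by
  obtain ⟨n, m, hn, hm⟩ := hΦ.exists_int_two_inner_eq hα hβ
  have hβα' : β ≠ -α := by
    rintro rfl
    rw [inner_neg_right, real_inner_self_eq_norm_sq] at hpos
    linarith [hΦ.sq_norm_pos hα]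
  have hnm := hΦ.int_mul_lt_four hα hβ hαβ.symm hβα' hn hm
  have hn0 : (0 : ℝ) < n := by nlinarith [hΦ.sq_norm_pos hα]
  have hm0 : (0 : ℝ) < m := by nlinarith [hΦ.sq_norm_pos hβ]
  have hn1 : 1 ≤ n := by exact_mod_cast hn0
  have hm1 : 1 ≤ m := by exact_mod_cast hm0
  obtain rfl | rfl : n = 1 ∨ m = 1 := by
    by_contra! h
    have : 2 ≤ n := by omega
    have : 2 ≤ m := by omega
    nlinarith
  · simpa using hΦ.neg_mem_s9
      (hΦ.sub_smul_mem hα hβ (k := 1) (by rw [real_inner_comm]; exact_mod_cast hn))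
  · simpa using hΦ.sub_smul_mem hβ hα (k := 1) (by exact_mod_cast hm)

theorem two_mul_sq_norm_le_of_sq_norm_le_inner (hΦ : IsRootSystem Φ) (hα : α ∈ Φ) (hβ : β ∈ Φ)
    (hαβ : α ≠ β) (hle : ‖α‖ ^ 2 ≤ ⟪α, β⟫) : ‖β‖ ^ 2 = 2 * ⟪α, β⟫ ∧ 2 * ‖α‖ ^ 2 ≤ ‖β‖ ^ 2 := by
  obtain ⟨n, m, hn, hm⟩ := hΦ.exists_int_two_inner_eq hα hβ
  have ha := hΦ.sq_norm_pos hα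
  have hβα' : β ≠ -α := by
    rintro rfl
    rw [inner_neg_right, real_inner_self_eq_norm_sq] at hle
    linarith
  have hnm := hΦ.int_mul_lt_four hα hβ hαβ.symm hβα' hn hm
  have hn2 : (2 : ℝ) ≤ n := by nlinarith
  have hm0 : (0 : ℝ) < m := by nlinarith [hΦ.sq_norm_pos hβ]
  have hn2' : 2 ≤ n := by exact_mod_cast hn2
  have hm0' : 0 < m := by exact_mod_cast hm0
  obtain rfl : m = 1 := by nlinarith
  constructor <;> push_cast at hm <;> linarith


theorem sq_norm_ratio_of_inner_ne_zero (hΦ : IsRootSystem Φ) (hα : α ∈ Φ) (hβ : β ∈ Φ)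
    (hαβ : ⟪α, β⟫ ≠ 0) :
    ‖β‖ ^ 2 = ‖α‖ ^ 2 ∨ ‖β‖ ^ 2 = 2 * ‖α‖ ^ 2 ∨ ‖β‖ ^ 2 = 3 * ‖α‖ ^ 2 ∨
      2 * ‖β‖ ^ 2 = ‖α‖ ^ 2 ∨ 3 * ‖β‖ ^ 2 = ‖α‖ ^ 2 := by
  by_cases hβα : β = α ∨ β = -α
  · rcases hβα with rfl | rfl <;> simp
  push Not at hβα
  obtain ⟨n, m, hn, hm⟩ := hΦ.exists_int_two_inner_eq hα hβ
  have hnm := hΦ.int_mul_lt_four hα hβ hβα.1 hβα.2 hn hm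
  have ha := hΦ.sq_norm_pos hα
  have hb := hΦ.sq_norm_pos hβ
  have hprod := mul_mul_sq_norm_eq_four_mul_inner_sq hn hm
  have hnm0 : 0 < n * m := by
    have : (0 : ℝ) < n * m := pos_of_mul_pos_left (hprod ▸ by positivity) (mul_pos ha hb).le
    exact_mod_cast this
  have hnmabs : n.natAbs * m.natAbs ≤ 3 := by
    rw [← Int.natAbs_mul]; omega
  have hn0 : n.natAbs ≠ 0 := by rintro h; simp_all
  have hm0 : m.natAbs ≠ 0 := by rintro h; simp_all
  -- `n` and `m` have the sign of `⟪α, β⟫`, so the relation `n ‖α‖² = m ‖β‖²` survives taking `|·|`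
  have habs : (n.natAbs : ℝ) * ‖α‖ ^ 2 = m.natAbs * ‖β‖ ^ 2 := by
    rw [Nat.cast_natAbs, Nat.cast_natAbs, Int.cast_abs, Int.cast_abs]
    simpa [abs_mul, abs_of_pos ha, abs_of_pos hb] using congrArg abs (hn.symm.trans hm)
  have : n.natAbs ≤ 3 := by nlinarith [Nat.pos_of_ne_zero hm0]
  have : m.natAbs ≤ 3 := by nlinarith [Nat.pos_of_ne_zero hn0]
  interval_cases n.natAbs <;> interval_cases m.natAbs <;> push_cast at habs <;>
    first
    | omega
    | (left; linarith)
    | (right; left; linarith)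
    | (right; right; left; linarith)
    | (right; right; right; left; linarith)
    | (right; right; right; right; linarith)

theorem exists_norm_eq_inner_ne_zero (hΦ : IsRootSystem Φ) (hirr : IsIrredSys Φ) (hα : α ∈ Φ)
    (hβ : β ∈ Φ) : ∃ x ∈ Φ, ‖x‖ = ‖α‖ ∧ ⟪β, x⟫ ≠ 0 := by
  set V := Submodule.span ℝ {x | x ∈ Φ ∧ ‖x‖ = ‖α‖}
  have hαV : α ∈ V := Submodule.subset_span ⟨hα, rfl⟩
  -- a root `y ∉ V` is orthogonal to `V`: otherwise reflecting a generator of `V` in `y`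
  -- puts a nonzero multiple of `y` in `V`
  have horth : ∀ y ∈ Φ, y ∉ V → V ≤ (ℝ ∙ y)ᗮ := by
    intro y hy hyV
    refine Submodule.span_le.mpr fun x ⟨hx, hxα⟩ => ?_
    rw [SetLike.mem_coe, Submodule.mem_orthogonal_singleton_iff_inner_right]
    by_contra hxy
    set k := 2 * ⟪x, y⟫ / ‖y‖ ^ 2
    have hk : 2 * ⟪x, y⟫ = k * ‖y‖ ^ 2 := (div_mul_cancel₀ _ (hΦ.sq_norm_pos hy).ne').symm
    have hk0 : k ≠ 0 :=
      div_ne_zero (by rw [real_inner_comm]; simpa using hxy) (hΦ.sq_norm_pos hy).ne'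
    have hrefl : x - k • y ∈ V := Submodule.subset_span
      ⟨hΦ.sub_smul_mem hy hx hk, (norm_sub_smul_eq_of_two_inner_eq hk).trans hxα⟩
    have hky : k • y ∈ V := by
      simpa using V.sub_mem (Submodule.subset_span ⟨hx, hxα⟩ : x ∈ V) hrefl
    exact hyV ((V.smul_mem_iff hk0).mp hky)
  have hΦV : ∀ y ∈ Φ, y ∈ V := by
    have := hirr {y | y ∈ Φ ∧ y ∈ V} (fun y hy => hy.1) fun x ⟨_, hxV⟩ y ⟨hy, hyV⟩ => by
      have := horth y hy (fun h => hyV ⟨hy, h⟩) hxV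
      rwa [Submodule.mem_orthogonal_singleton_iff_inner_right, real_inner_comm] at this
    rcases this with h | h
    · exact absurd (h ▸ ⟨hα, hαV⟩ : α ∈ (∅ : Set F)) id
    · exact fun y hy => (h.symm ▸ hy : y ∈ {y | y ∈ Φ ∧ y ∈ V}).2
  by_contra! hβorth
  have hVβ : V ≤ (ℝ ∙ β)ᗮ := Submodule.span_le.mpr fun x ⟨hx, hxα⟩ => by
    rw [SetLike.mem_coe, Submodule.mem_orthogonal_singleton_iff_inner_right]
    exact hβorth x hx hxα
  have := hVβ (hΦV β hβ)
  rw [Submodule.mem_orthogonal_singleton_iff_inner_right, real_inner_self_eq_norm_sq] at this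
  exact (hΦ.sq_norm_pos hβ).ne' this

theorem sq_norm_ratio (hΦ : IsRootSystem Φ) (hirr : IsIrredSys Φ) (hα : α ∈ Φ) (hβ : β ∈ Φ) :
    ‖β‖ ^ 2 = ‖α‖ ^ 2 ∨ ‖β‖ ^ 2 = 2 * ‖α‖ ^ 2 ∨ ‖β‖ ^ 2 = 3 * ‖α‖ ^ 2 ∨
      2 * ‖β‖ ^ 2 = ‖α‖ ^ 2 ∨ 3 * ‖β‖ ^ 2 = ‖α‖ ^ 2 := by
  obtain ⟨x, hx, hxα, hβx⟩ := hΦ.exists_norm_eq_inner_ne_zero hirr hα hβ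
  rw [← hxα]
  exact hΦ.sq_norm_ratio_of_inner_ne_zero hx hβ (by rwa [real_inner_comm])

theorem sq_norm_le_three_mul (hΦ : IsRootSystem Φ) (hirr : IsIrredSys Φ) (hα : α ∈ Φ)
    (hβ : β ∈ Φ) : ‖β‖ ^ 2 ≤ 3 * ‖α‖ ^ 2 := by
  have := hΦ.sq_norm_pos hα
  rcases hΦ.sq_norm_ratio hirr hα hβ with h | h | h | h | h <;> linarith

theorem two_mul_sq_norm_le_of_norm_lt (hΦ : IsRootSystem Φ) (hirr : IsIrredSys Φ) (hα : α ∈ Φ)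
    (hβ : β ∈ Φ) (hlt : ‖α‖ < ‖β‖) : 2 * ‖α‖ ^ 2 ≤ ‖β‖ ^ 2 := by
  have := hΦ.sq_norm_pos hα
  have hsq : ‖α‖ ^ 2 < ‖β‖ ^ 2 := by gcongr
  rcases hΦ.sq_norm_ratio hirr hα hβ with h | h | h | h | h <;> linarith

theorem norm_eq_or_norm_eq_of_norm_lt (hΦ : IsRootSystem Φ) (hirr : IsIrredSys Φ) (hα : α ∈ Φ)
    (hβ : β ∈ Φ) (hlt : ‖α‖ < ‖β‖) (hδ : δ ∈ Φ) : ‖δ‖ = ‖α‖ ∨ ‖δ‖ = ‖β‖ := by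
  have hαβ := hΦ.two_mul_sq_norm_le_of_norm_lt hirr hα hβ hlt
  have := hΦ.sq_norm_pos hδ
  by_contra! h
  rcases h.1.lt_or_gt with hδα | hαδ
  · linarith [hΦ.two_mul_sq_norm_le_of_norm_lt hirr hδ hα hδα, hΦ.sq_norm_le_three_mul hirr hδ hβ]
  rcases h.2.lt_or_gt with hδβ | hβδ
  · linarith [hΦ.two_mul_sq_norm_le_of_norm_lt hirr hα hδ hαδ,
      hΦ.two_mul_sq_norm_le_of_norm_lt hirr hδ hβ hδβ, hΦ.sq_norm_le_three_mul hirr hα hβ]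
  · linarith [hΦ.two_mul_sq_norm_le_of_norm_lt hirr hβ hδ hβδ, hΦ.sq_norm_le_three_mul hirr hα hδ]

end IsRootSystem

theorem inner_sum_smul_nonneg {Δ S : Finset F} {x : F} (hx : ∀ a ∈ Δ, a ∉ S → 0 ≤ ⟪x, a⟫)
    {d : F → ℝ} (hd : ∀ a ∈ Δ, 0 ≤ d a) (hdS : ∀ a ∈ S, d a = 0) : 0 ≤ ⟪x, ∑ a ∈ Δ, d a • a⟫ := by
  rw [inner_sum]
  refine Finset.sum_nonneg fun a ha => ?_
  rw [real_inner_smul_right]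
  by_cases haS : a ∈ S
  · rw [hdS a haS, zero_mul]
  · exact mul_nonneg (hd a ha) (hx a ha haS)

namespace IsBase

variable {Φ Δ : Finset F} {c : F → F → ℝ} {x y : F}

theorem coeff_eq_of_sum_smul_eq (hB : IsBase Φ Δ c) {f g : F → ℝ}
    (h : ∑ a ∈ Δ, f a • a = ∑ a ∈ Δ, g a • a) : ∀ a ∈ Δ, f a = g a :=
  linearIndepOn_finset_iffₛ.mp (linearIndependent_subtype_iff.mp hB.indep) f g h

theorem sub_eq_sum (hB : IsBase Φ Δ c) (hx : x ∈ Φ) (hy : y ∈ Φ) :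
    x - y = ∑ a ∈ Δ, (c x a - c y a) • a := by
  simp only [sub_smul, Finset.sum_sub_distrib]
  rw [← hB.repr x hx, ← hB.repr y hy]

theorem coord_le_of_rootLe (hB : IsBase Φ Δ c) (hx : x ∈ Φ) (hy : y ∈ Φ)
    (hxy : rootLe Φ Δ c x y) : ∀ a ∈ Δ, c x a ≤ c y a := by
  obtain ⟨f, hf, hsum⟩ := hxy
  set P := Φ.filter fun ρ => ∀ a ∈ Δ, 0 ≤ c ρ a
  have hcoord : ∑ ρ ∈ P, f ρ • ρ = ∑ a ∈ Δ, (∑ ρ ∈ P, f ρ * c ρ a) • a := calc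
    ∑ ρ ∈ P, f ρ • ρ = ∑ ρ ∈ P, ∑ a ∈ Δ, (f ρ * c ρ a) • a := by
      refine Finset.sum_congr rfl fun ρ hρ => ?_
      rw [congrArg (f ρ • ·) (hB.repr ρ (Finset.mem_filter.mp hρ).1), Finset.smul_sum]
      simp only [smul_smul]
    _ = ∑ a ∈ Δ, (∑ ρ ∈ P, f ρ * c ρ a) • a := by
      rw [Finset.sum_comm]
      simp only [Finset.sum_smul]
  intro a ha
  have := hB.coeff_eq_of_sum_smul_eq ((hB.sub_eq_sum hy hx).symm.trans (hsum.trans hcoord)) a ha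
  have hnonneg : 0 ≤ ∑ ρ ∈ P, f ρ * c ρ a :=
    Finset.sum_nonneg fun ρ hρ => mul_nonneg (hf ρ) ((Finset.mem_filter.mp hρ).2 a ha)
  linarith

theorem inner_sub_nonneg (hB : IsBase Φ Δ c) {S : Finset F} (hx : x ∈ Φ) (hy : y ∈ Φ)
    (hle : ∀ a ∈ Δ, c y a ≤ c x a) (hS : ∀ a ∈ S, c x a = c y a) {γ : F}
    (hγ : ∀ a ∈ Δ, a ∉ S → 0 ≤ ⟪γ, a⟫) : 0 ≤ ⟪γ, x - y⟫ := by
  rw [hB.sub_eq_sum hx hy]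
  exact inner_sum_smul_nonneg hγ (fun a ha => sub_nonneg.mpr (hle a ha))
    fun a ha => sub_eq_zero.mpr (hS a ha)

end IsBase

section Level

variable {Φ Δ : Finset F} {c : F → F → ℝ} {S : Finset F} {β M γ : F}

theorem sq_norm_eq_two_inner_of_mem_lev (hΦ : IsRootSystem Φ) (hB : IsBase Φ Δ c)
    (hM : M ∈ lev Φ c S β) (hγ : γ ∈ lev Φ c S β) (hγM : rootLe Φ Δ c γ M)
    (hdom : ∀ a ∈ Δ, a ∉ S → 0 ≤ ⟪γ, a⟫) (hne : γ ≠ M) :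
    ‖M‖ ^ 2 = 2 * ⟪γ, M⟫ ∧ 2 * ‖γ‖ ^ 2 ≤ ‖M‖ ^ 2 := by
  have h := hB.inner_sub_nonneg hM.1 hγ.1 (hB.coord_le_of_rootLe hγ.1 hM.1 hγM)
    (fun a ha => (hM.2 a ha).trans (hγ.2 a ha).symm) hdom
  rw [inner_sub_right, real_inner_self_eq_norm_sq] at h
  exact hΦ.two_mul_sq_norm_le_of_sq_norm_le_inner hγ.1 hM.1 hne (by linarith)

theorem norm_lt_of_mem_lev (hΦ : IsRootSystem Φ) (hB : IsBase Φ Δ c)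
    (hM : M ∈ lev Φ c S β) (hγ : γ ∈ lev Φ c S β) (hγM : rootLe Φ Δ c γ M)
    (hdom : ∀ a ∈ Δ, a ∉ S → 0 ≤ ⟪γ, a⟫) (hne : γ ≠ M) : ‖γ‖ < ‖M‖ := by
  have := (sq_norm_eq_two_inner_of_mem_lev hΦ hB hM hγ hγM hdom hne).2
  have := hΦ.sq_norm_pos hγ.1
  exact (pow_lt_pow_iff_left₀ (norm_nonneg _) (norm_nonneg _) two_ne_zero).mp (by linarith)

theorem eq_of_mem_lev_of_inner_pos (hΦ : IsRootSystem Φ) (hB : IsBase Φ Δ c) {γ₁ γ₂ : F}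
    (hγ₁ : γ₁ ∈ lev Φ c S β) (hγ₂ : γ₂ ∈ lev Φ c S β)
    (hdom₁ : ∀ a ∈ Δ, a ∉ S → 0 ≤ ⟪γ₁, a⟫) (hdom₂ : ∀ a ∈ Δ, a ∉ S → 0 ≤ ⟪γ₂, a⟫)
    (hnorm : ‖γ₁‖ = ‖γ₂‖) (hpos : 0 < ⟪γ₁, γ₂⟫) : γ₁ = γ₂ := by
  by_contra hne
  -- `γ₁ - γ₂` is a root with vanishing `S`-coordinates; pairing it, or its negative,
  -- with a dominant `γᵢ` gives the equality case of Cauchy–Schwarz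
  have hroot := hΦ.sub_mem_of_inner_pos hγ₁.1 hγ₂.1 hne hpos
  have hcoord := hB.coeff_eq_of_sum_smul_eq
    ((hB.repr _ hroot).symm.trans (hB.sub_eq_sum hγ₁.1 hγ₂.1))
  have hS₁₂ : ∀ a ∈ S, c γ₁ a = c γ₂ a := fun a ha => (hγ₁.2 a ha).trans (hγ₂.2 a ha).symm
  rcases hB.sign _ hroot with hposr | hnegr
  · have h := hB.inner_sub_nonneg hγ₁.1 hγ₂.1
      (fun a ha => by linarith [hposr a ha, hcoord a ha]) hS₁₂ hdom₂
    rw [inner_sub_right, real_inner_self_eq_norm_sq] at h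
    exact hne (eq_of_norm_le_of_sq_norm_le_inner hnorm.le (by linarith)).symm
  · have h := hB.inner_sub_nonneg hγ₂.1 hγ₁.1
      (fun a ha => by linarith [hnegr a ha, hcoord a ha]) (fun a ha => (hS₁₂ a ha).symm) hdom₁
    rw [inner_sub_right, real_inner_self_eq_norm_sq] at h
    exact hne (eq_of_norm_le_of_sq_norm_le_inner hnorm.ge (by linarith))

theorem eq_add_of_mem_lev_of_inner_nonpos (hΦ : IsRootSystem Φ) (hB : IsBase Φ Δ c)
    (hM : M ∈ lev Φ c S β) (hmax : ∀ γ ∈ lev Φ c S β, rootLe Φ Δ c γ M) {γ₁ γ₂ : F}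
    (hγ₁ : γ₁ ∈ lev Φ c S β) (hγ₂ : γ₂ ∈ lev Φ c S β)
    (hdom₁ : ∀ a ∈ Δ, a ∉ S → 0 ≤ ⟪γ₁, a⟫) (hdom₂ : ∀ a ∈ Δ, a ∉ S → 0 ≤ ⟪γ₂, a⟫)
    (hM₁ : γ₁ ≠ M) (hM₂ : γ₂ ≠ M) (hnorm : ‖γ₁‖ = ‖γ₂‖) (hle : ⟪γ₁, γ₂⟫ ≤ 0) :
    M = γ₁ + γ₂ := by
  obtain ⟨hMγ₁, hγ₁M⟩ := sq_norm_eq_two_inner_of_mem_lev hΦ hB hM hγ₁ (hmax γ₁ hγ₁) hdom₁ hM₁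
  have hMγ₂ := (sq_norm_eq_two_inner_of_mem_lev hΦ hB hM hγ₂ (hmax γ₂ hγ₂) hdom₂ hM₂).1
  -- `M - γ₁` has the length of `γ₂` and pairs with it to at least `‖γ₂‖²`
  have hsub : γ₂ = M - γ₁ := by
    refine eq_of_norm_le_of_sq_norm_le_inner ?_ ?_
    · refine (pow_le_pow_iff_left₀ (norm_nonneg _) (norm_nonneg _) two_ne_zero).mp ?_
      rw [norm_sub_sq_real, real_inner_comm, ← hnorm]
      linarith
    · rw [inner_sub_right, real_inner_comm γ₁ γ₂, ← hnorm]
      linarith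
  rw [hsub, add_sub_cancel]

theorem eq_of_mem_lev_of_norm_eq (hΦ : IsRootSystem Φ) (hB : IsBase Φ Δ c) (hS : S ⊆ Δ)
    (hsupp : ∃ a ∈ S, c β a ≠ 0) (hM : M ∈ lev Φ c S β)
    (hmax : ∀ γ ∈ lev Φ c S β, rootLe Φ Δ c γ M) {γ₁ γ₂ : F}
    (hγ₁ : γ₁ ∈ lev Φ c S β) (hγ₂ : γ₂ ∈ lev Φ c S β)
    (hdom₁ : ∀ a ∈ Δ, a ∉ S → 0 ≤ ⟪γ₁, a⟫) (hdom₂ : ∀ a ∈ Δ, a ∉ S → 0 ≤ ⟪γ₂, a⟫)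
    (hnorm : ‖γ₁‖ = ‖γ₂‖) : γ₁ = γ₂ := by
  by_contra hne
  have hM₁ : γ₁ ≠ M := by
    rintro rfl
    exact (norm_lt_of_mem_lev hΦ hB hM hγ₂ (hmax γ₂ hγ₂) hdom₂ (Ne.symm hne)).ne hnorm.symm
  have hM₂ : γ₂ ≠ M := by
    rintro rfl
    exact (norm_lt_of_mem_lev hΦ hB hM hγ₁ (hmax γ₁ hγ₁) hdom₁ hne).ne hnorm
  rcases le_or_gt ⟪γ₁, γ₂⟫ 0 with hle | hpos
  · have hadd := eq_add_of_mem_lev_of_inner_nonpos hΦ hB hM hmax hγ₁ hγ₂ hdom₁ hdom₂ hM₁ hM₂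
      hnorm hle
    have hcoord := hB.coeff_eq_of_sum_smul_eq (f := c M) (g := fun a => c γ₁ a + c γ₂ a) (by
      simp only [add_smul, Finset.sum_add_distrib]
      rw [← hB.repr M hM.1, ← hB.repr γ₁ hγ₁.1, ← hB.repr γ₂ hγ₂.1, hadd])
    obtain ⟨a, haS, ha⟩ := hsupp
    have := hcoord a (hS haS)
    rw [hM.2 a haS, hγ₁.2 a haS, hγ₂.2 a haS] at this
    exact ha (by linarith)
  · exact hne (eq_of_mem_lev_of_inner_pos hΦ hB hγ₁ hγ₂ hdom₁ hdom₂ hnorm hpos)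

end Level

theorem stmt9_general (Φ Δ : Finset E) (c : E → E → ℝ)
    (hΦ : IsRootSystem Φ) (hB : IsBase Φ Δ c) (hirr : IsIrredSys Φ)
    (S : Finset E) (hS : S ⊆ Δ) (β : E)
    (hsupp : ∃ a ∈ S, c β a ≠ 0)
    (M : E) (hM : M ∈ lev Φ c S β ∧ ∀ γ ∈ lev Φ c S β, rootLe Φ Δ c γ M) :
    (∀ γ ∈ lev Φ c S β, (∀ a ∈ Δ, a ∉ S → 0 ≤ ⟪γ, a⟫) → γ ≠ M →
      (∀ δ ∈ Φ, ‖δ‖ ≤ ‖M‖) ∧ (∀ δ ∈ Φ, ‖γ‖ ≤ ‖δ‖)) ∧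
    (∀ γ₁ ∈ lev Φ c S β, ∀ γ₂ ∈ lev Φ c S β,
      (∀ a ∈ Δ, a ∉ S → 0 ≤ ⟪γ₁, a⟫) → (∀ a ∈ Δ, a ∉ S → 0 ≤ ⟪γ₂, a⟫) →
      ‖γ₁‖ = ‖γ₂‖ → γ₁ = γ₂) := by
  obtain ⟨hMl, hmax⟩ := hM
  refine ⟨fun γ hγ hdom hne => ?_, fun γ₁ hγ₁ γ₂ hγ₂ =>
    eq_of_mem_lev_of_norm_eq hΦ hB hS hsupp hMl hmax hγ₁ hγ₂⟩
  have hlt := norm_lt_of_mem_lev hΦ hB hMl hγ (hmax γ hγ) hdom hne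
  have hlengths := fun δ (hδ : δ ∈ Φ) =>
    hΦ.norm_eq_or_norm_eq_of_norm_lt hirr hγ.1 hMl.1 hlt hδ
  refine ⟨fun δ hδ => ?_, fun δ hδ => ?_⟩ <;> rcases hlengths δ hδ with h | h <;> linarith

/-- If `γ ∈ Φ_{S,β}` is `(Π \ S)`-dominant and different from `max Φ_{S,β}`, then the
maximum is a long root and `γ` is a short root; consequently `Φ_{S,β}` contains at most
one `(Π \ S)`-dominant root of each length. -/
theorem stmt9 (Φ Δ : Finset E) (c : E → E → ℝ)
    (hΦ : IsRootSystem Φ) (hB : IsBase Φ Δ c) (hirr : IsIrredSys Φ)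
    (S : Finset E) (hS : S ⊆ Δ) (β : E) (hβ : β ∈ Φ)
    (hβpos : ∀ a ∈ Δ, 0 ≤ c β a) (hsupp : ∃ a ∈ S, c β a ≠ 0)
    (M : E) (hM : M ∈ lev Φ c S β ∧ ∀ γ ∈ lev Φ c S β, rootLe Φ Δ c γ M) :
    (∀ γ ∈ lev Φ c S β, (∀ a ∈ Δ, a ∉ S → 0 ≤ ⟪γ, a⟫) → γ ≠ M →
      (∀ δ ∈ Φ, ‖δ‖ ≤ ‖M‖) ∧ (∀ δ ∈ Φ, ‖γ‖ ≤ ‖δ‖)) ∧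
    (∀ γ₁ ∈ lev Φ c S β, ∀ γ₂ ∈ lev Φ c S β,
      (∀ a ∈ Δ, a ∉ S → 0 ≤ ⟪γ₁, a⟫) → (∀ a ∈ Δ, a ∉ S → 0 ≤ ⟪γ₂, a⟫) →
      ‖γ₁‖ = ‖γ₂‖ → γ₁ = γ₂) :=
  stmt9_general Φ Δ c hΦ hB hirr S hS β hsupp M hM
end
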